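/- arXiv:0901.0761 — 7 statements merged into one kernel-verified Lean document; each statement's English description precedes it below -/
import Mathlib

section
/- For a star-shaped domain D in R^3 with star center a, and any continuously differentiable divergence-free vector field u on the closure of D, the Poincaré lifting R_a(u)(x) := (∫_0^1 t·u(a + t(x-a)) dt) × (x - a) satisfies curl(R_a(u)) = u on D. -/
open MeasureTheory

/-- Partial derivative of a scalar function on ℝ³. -/
noncomputable def pd3 (f : (Fin 3 → ℝ) → ℝ) (i : Fin 3) (x : Fin 3 → ℝ) : ℝ :=
  fderiv ℝ f x (Pi.single i 1)

/-- Curl of a vector field on ℝ³. -/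
noncomputable def curl3 (u : (Fin 3 → ℝ) → (Fin 3 → ℝ)) (x : Fin 3 → ℝ) : Fin 3 → ℝ :=
  ![pd3 (fun y => u y 2) 1 x - pd3 (fun y => u y 1) 2 x,
    pd3 (fun y => u y 0) 2 x - pd3 (fun y => u y 2) 0 x,
    pd3 (fun y => u y 1) 0 x - pd3 (fun y => u y 0) 1 x]

/-- Divergence of a vector field on ℝ³. -/
noncomputable def div3 (u : (Fin 3 → ℝ) → (Fin 3 → ℝ)) (x : Fin 3 → ℝ) : ℝ :=
  ∑ i, pd3 (fun y => u y i) i x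

/-- Gradient of a scalar field on ℝ³. -/
noncomputable def grad3 (f : (Fin 3 → ℝ) → ℝ) (x : Fin 3 → ℝ) : Fin 3 → ℝ :=
  fun i => pd3 f i x

/-- Cross product in ℝ³. -/
def cross3 (a b : Fin 3 → ℝ) : Fin 3 → ℝ :=
  ![a 1 * b 2 - a 2 * b 1, a 2 * b 0 - a 0 * b 2, a 0 * b 1 - a 1 * b 0]

/-- Euclidean dot product in ℝ³. -/
def dot3 (a b : Fin 3 → ℝ) : ℝ := ∑ i, a i * b i

/-- `f` is (given by) a polynomial of total degree ≤ p. -/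
def IsPoly3 (p : ℕ) (f : (Fin 3 → ℝ) → ℝ) : Prop :=
  ∃ q : MvPolynomial (Fin 3) ℝ, q.totalDegree ≤ p ∧ ∀ x, f x = MvPolynomial.eval x q

/-- Vector field whose components are polynomials of total degree ≤ p. -/
def IsPolyVec3 (p : ℕ) (u : (Fin 3 → ℝ) → (Fin 3 → ℝ)) : Prop :=
  ∀ i, IsPoly3 p (fun x => u x i)

/-- First-family Nédélec space of degree p (as a set of vector fields). -/
def NedelecW1 (p : ℕ) : Set ((Fin 3 → ℝ) → (Fin 3 → ℝ)) :=
  {v | ∃ P Q, IsPolyVec3 p P ∧ IsPolyVec3 p Q ∧ ∀ x, v x = P x + cross3 (Q x) x}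

/-- Face-element (second family) space of degree p. -/
def NedelecW2 (p : ℕ) : Set ((Fin 3 → ℝ) → (Fin 3 → ℝ)) :=
  {v | ∃ P q, IsPolyVec3 p P ∧ IsPoly3 p q ∧ ∀ x, v x = P x + q x • x}

/-- Poincaré lifting with center a. -/
noncomputable def Rlift (a : Fin 3 → ℝ) (u : (Fin 3 → ℝ) → (Fin 3 → ℝ))
    (x : Fin 3 → ℝ) : Fin 3 → ℝ :=
  cross3 (∫ t in (0:ℝ)..1, t • u (a + t • (x - a))) (x - a)

/-- Degree-2 Poincaré lifting with center a. -/
noncomputable def Dlift (a : Fin 3 → ℝ) (u : (Fin 3 → ℝ) → ℝ)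
    (x : Fin 3 → ℝ) : Fin 3 → ℝ :=
  (∫ t in (0:ℝ)..1, t ^ 2 * u (a + t • (x - a))) • (x - a)


/-!
Write `g y = ∫₀¹ t u(a + t(y - a)) dt`, so that `Rlift a u y = g y × (y - a)`. If `g` has
derivative `G` at `x`, the product rule gives
`curl (g × (· - a)) x = 2 g x + G (x - a) - (tr G) (x - a)`. Differentiating under the integral
sign, `G = ∫₀¹ t² Du(a + t(x - a)) dt`, whose trace `∫₀¹ t² div u` vanishes; and
`2 g x + G (x - a) = ∫₀¹ d/dt (t² u(a + t(x - a))) dt = u x`.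
-/

open Set

noncomputable def diagSum (n : ℕ) : ((Fin n → ℝ) →L[ℝ] (Fin n → ℝ)) →L[ℝ] ℝ :=
  ∑ i, (ContinuousLinearMap.proj i).comp (ContinuousLinearMap.apply ℝ (Fin n → ℝ) (Pi.single i 1))

theorem diagSum_apply {n : ℕ} (L : (Fin n → ℝ) →L[ℝ] (Fin n → ℝ)) :
    diagSum n L = ∑ i, L (Pi.single i 1) i := by
  simp [diagSum]

theorem pd3_apply_of_hasFDerivAt {h : (Fin 3 → ℝ) → (Fin 3 → ℝ)}
    {L : (Fin 3 → ℝ) →L[ℝ] (Fin 3 → ℝ)} {x : Fin 3 → ℝ} (hL : HasFDerivAt h L x) (i j : Fin 3) :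
    pd3 (fun y => h y i) j x = L (Pi.single j 1) i := by
  have hi : HasFDerivAt (fun y => h y i) ((ContinuousLinearMap.proj i).comp L) x :=
    (ContinuousLinearMap.proj (R := ℝ) (φ := fun _ : Fin 3 => ℝ) i).hasFDerivAt.comp x hL
  rw [pd3, hi.fderiv]
  rfl

theorem div3_eq_diagSum_fderiv {u : (Fin 3 → ℝ) → (Fin 3 → ℝ)} {x : Fin 3 → ℝ}
    (hu : DifferentiableAt ℝ u x) : div3 u x = diagSum 3 (fderiv ℝ u x) := by
  simp only [div3, diagSum_apply, pd3_apply_of_hasFDerivAt hu.hasFDerivAt]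

theorem cross3_eq_crossProduct (v w : Fin 3 → ℝ) : cross3 v w = crossProduct v w := by
  rw [cross_apply]; rfl

theorem HasFDerivAt.cross3 {f g : (Fin 3 → ℝ) → (Fin 3 → ℝ)}
    {F G : (Fin 3 → ℝ) →L[ℝ] (Fin 3 → ℝ)} {x : Fin 3 → ℝ}
    (hf : HasFDerivAt f F x) (hg : HasFDerivAt g G x) :
    ∃ L : (Fin 3 → ℝ) →L[ℝ] (Fin 3 → ℝ), HasFDerivAt (fun y => cross3 (f y) (g y)) L x ∧
      ∀ v, L v = cross3 (F v) (g x) + cross3 (f x) (G v) := by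
  have h := (crossProduct (R := ℝ)).toContinuousBilinearMap.hasFDerivAt_of_bilinear hf hg
  simp only [← cross3_eq_crossProduct, LinearMap.toContinuousBilinearMap_apply] at h
  refine ⟨_, h, fun v => ?_⟩
  simp [cross3_eq_crossProduct, LinearMap.toContinuousBilinearMap_apply, add_comm]

theorem curl3_cross3_sub {g : (Fin 3 → ℝ) → (Fin 3 → ℝ)} {G : (Fin 3 → ℝ) →L[ℝ] (Fin 3 → ℝ)}
    {a x : Fin 3 → ℝ} (hg : HasFDerivAt g G x) :
    curl3 (fun y => cross3 (g y) (y - a)) x =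
      (2 : ℝ) • g x + G (x - a) - diagSum 3 G • (x - a) := by
  have hr : HasFDerivAt (fun y => y - a) (ContinuousLinearMap.id ℝ (Fin 3 → ℝ)) x :=
    (hasFDerivAt_id x).sub_const a
  obtain ⟨L, hL, hLv⟩ := hg.cross3 hr
  have hxa : G (x - a) = ∑ k, (x k - a k) • G (Pi.single k 1) := by
    conv_lhs => rw [pi_eq_sum_univ' (x - a)]
    simp [map_sum]
  simp only [curl3, pd3_apply_of_hasFDerivAt hL, hLv, diagSum_apply, hxa]
  ext i
  fin_cases i <;> simp [cross3, Fin.sum_univ_three] <;> ring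

section Ray

variable {E F : Type*} [NormedAddCommGroup E] [NormedSpace ℝ E]
  [NormedAddCommGroup F] [NormedSpace ℝ F] {U : Set E} {a x : E}

noncomputable def rayIntegral (a : E) (u : E → F) (y : E) : F :=
  ∫ t in (0 : ℝ)..1, t • u (a + t • (y - a))

theorem ContinuousOn.comp_ray {X : Type*} [TopologicalSpace X] {f : E → X}
    (hf : ContinuousOn f U) (hU : StarConvex ℝ a U) (hx : x ∈ U) :
    ContinuousOn (fun t : ℝ => f (a + t • (x - a))) (Icc 0 1) :=
  hf.comp (by fun_prop) fun _ ht => hU.add_smul_sub_mem hx ht.1 ht.2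

theorem ContinuousOn.exists_bound_on_cone {G : Type*} [SeminormedAddGroup G] {f : E → G}
    (hf : ContinuousOn f U) (hU : StarConvex ℝ a U) {K : Set E} (hK : IsCompact K)
    (hKU : K ⊆ U) : ∃ C, ∀ t ∈ Icc (0 : ℝ) 1, ∀ y ∈ K, ‖f (a + t • (y - a))‖ ≤ C := by
  set cone := (fun p : ℝ × E => a + p.1 • (p.2 - a)) '' Icc 0 1 ×ˢ K
  have hcone : IsCompact cone := (isCompact_Icc.prod hK).image (by fun_prop)
  have hconeU : cone ⊆ U := by
    rintro _ ⟨⟨t, y⟩, ⟨ht, hy⟩, rfl⟩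
    exact hU.add_smul_sub_mem (hKU hy) ht.1 ht.2
  obtain ⟨C, hC⟩ := hcone.exists_bound_of_continuousOn (hf.mono hconeU)
  exact ⟨C, fun t ht y hy => hC _ ⟨(t, y), ⟨ht, hy⟩, rfl⟩⟩

theorem hasFDerivAt_smul_comp_ray {u : E → F} {t : ℝ} {y : E}
    (hu : DifferentiableAt ℝ u (a + t • (y - a))) :
    HasFDerivAt (fun y => t • u (a + t • (y - a))) (t ^ 2 • fderiv ℝ u (a + t • (y - a))) y := by
  have hray : HasFDerivAt (fun y => a + t • (y - a)) (t • ContinuousLinearMap.id ℝ E) y :=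
    (((hasFDerivAt_id y).sub_const a).const_smul t).const_add a
  have hL : t • (fderiv ℝ u (a + t • (y - a))).comp (t • ContinuousLinearMap.id ℝ E) =
      t ^ 2 • fderiv ℝ u (a + t • (y - a)) := by
    ext v
    simp [pow_two, smul_smul]
  exact hL ▸ (hu.hasFDerivAt.comp y hray).const_smul t

variable {u : E → F}

theorem hasFDerivAt_rayIntegral [ProperSpace E] (hU : IsOpen U) (ha : StarConvex ℝ a U)
    (hu : ContDiffOn ℝ 1 u U) (hx : x ∈ U) :
    HasFDerivAt (rayIntegral a u) (∫ t in (0 : ℝ)..1, t ^ 2 • fderiv ℝ u (a + t • (x - a))) x := by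
  obtain ⟨ε, hε, hball⟩ := Metric.nhds_basis_closedBall.mem_iff.1 (hU.mem_nhds hx)
  obtain ⟨C, hC⟩ := (hu.continuousOn_fderiv_of_isOpen hU le_rfl).exists_bound_on_cone ha
    (isCompact_closedBall x ε) hball
  have hcont : ∀ y ∈ U, ContinuousOn (fun t : ℝ => t • u (a + t • (y - a))) (Icc 0 1) :=
    fun y hy => continuousOn_id.smul (hu.continuousOn.comp_ray ha hy)
  have hcont' : ContinuousOn (fun t : ℝ => t ^ 2 • fderiv ℝ u (a + t • (x - a))) (Icc 0 1) :=
    (continuousOn_id.pow 2).smul ((hu.continuousOn_fderiv_of_isOpen hU le_rfl).comp_ray ha hx)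
  refine intervalIntegral.hasFDerivAt_integral_of_dominated_of_fderiv_le (bound := fun _ => C)
    (F' := fun y t => t ^ 2 • fderiv ℝ u (a + t • (y - a)))
    (Metric.closedBall_mem_nhds x hε) ?_ ((hcont x hx).intervalIntegrable_of_Icc zero_le_one)
    (hcont'.intervalIntegrable_of_Icc zero_le_one).def'.aestronglyMeasurable ?_
    intervalIntegrable_const ?_
  · filter_upwards [Metric.closedBall_mem_nhds x hε] with y hy
    exact ((hcont y (hball hy)).intervalIntegrable_of_Icc zero_le_one).def'.aestronglyMeasurable
  · refine Filter.Eventually.of_forall fun t ht y hy => ?_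
    rw [uIoc_of_le zero_le_one] at ht
    have ht2 : ‖t ^ 2‖ ≤ 1 := by
      rw [norm_pow, Real.norm_of_nonneg ht.1.le]
      exact pow_le_one₀ ht.1.le ht.2
    rw [norm_smul]
    exact (mul_le_of_le_one_left (norm_nonneg _) ht2).trans (hC t (Ioc_subset_Icc_self ht) y hy)
  · refine Filter.Eventually.of_forall fun t ht y hy => hasFDerivAt_smul_comp_ray ?_
    rw [uIoc_of_le zero_le_one] at ht
    exact (hu.differentiableOn one_ne_zero).differentiableAt <| hU.mem_nhds <|
      ha.add_smul_sub_mem (hball hy) ht.1.le ht.2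

theorem two_smul_rayIntegral_add_integral_fderiv_apply [CompleteSpace F] (hU : IsOpen U)
    (ha : StarConvex ℝ a U) (hu : ContDiffOn ℝ 1 u U) (hx : x ∈ U) :
    (2 : ℝ) • rayIntegral a u x +
      (∫ t in (0 : ℝ)..1, t ^ 2 • fderiv ℝ u (a + t • (x - a))) (x - a) = u x := by
  have hray : ∀ t ∈ uIcc (0 : ℝ) 1, a + t • (x - a) ∈ U := fun t ht => by
    rw [uIcc_of_le zero_le_one] at ht
    exact ha.add_smul_sub_mem hx ht.1 ht.2
  have hderiv : ∀ t ∈ uIcc (0 : ℝ) 1, HasDerivAt (fun t : ℝ => t ^ 2 • u (a + t • (x - a)))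
      ((2 * t) • u (a + t • (x - a)) + t ^ 2 • fderiv ℝ u (a + t • (x - a)) (x - a)) t := by
    intro t ht
    have hu' : HasFDerivAt u (fderiv ℝ u (a + t • (x - a))) (a + t • (x - a)) :=
      ((hu.differentiableOn one_ne_zero).differentiableAt (hU.mem_nhds (hray t ht))).hasFDerivAt
    have hline : HasDerivAt (fun t : ℝ => a + t • (x - a)) (x - a) t := by
      simpa using ((hasDerivAt_id t).smul_const (x - a)).const_add a
    exact ((hasDerivAt_pow 2 t).smul (hu'.comp_hasDerivAt t hline)).congr_deriv
      (by simp [add_comm])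
  have hcont := hu.continuousOn.comp_ray ha hx
  have hcont' := (hu.continuousOn_fderiv_of_isOpen hU le_rfl).comp_ray ha hx
  have hint : IntervalIntegrable (fun t : ℝ => (2 * t) • u (a + t • (x - a))) volume 0 1 :=
    ((continuousOn_const.mul continuousOn_id).smul hcont).intervalIntegrable_of_Icc zero_le_one
  have hint' : IntervalIntegrable (fun t : ℝ => t ^ 2 • fderiv ℝ u (a + t • (x - a))) volume 0 1 :=
    ((continuousOn_id.pow 2).smul hcont').intervalIntegrable_of_Icc zero_le_one
  have hint'' : IntervalIntegrable
      (fun t : ℝ => t ^ 2 • fderiv ℝ u (a + t • (x - a)) (x - a)) volume 0 1 :=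
    ((continuousOn_id.pow 2).smul (hcont'.clm_apply continuousOn_const)).intervalIntegrable_of_Icc
      zero_le_one
  calc (2 : ℝ) • rayIntegral a u x +
        (∫ t in (0 : ℝ)..1, t ^ 2 • fderiv ℝ u (a + t • (x - a))) (x - a)
      = ∫ t in (0 : ℝ)..1,
          (2 * t) • u (a + t • (x - a)) + t ^ 2 • fderiv ℝ u (a + t • (x - a)) (x - a) := by
        rw [intervalIntegral.integral_add hint hint'',
          ContinuousLinearMap.intervalIntegral_apply hint', rayIntegral,
          ← intervalIntegral.integral_smul]
        simp only [mul_smul, FunLike.coe_smul, Pi.smul_apply]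
    _ = u x := by
        rw [intervalIntegral.integral_eq_sub_of_hasDerivAt hderiv (hint.add hint'')]
        simp

end Ray

theorem diagSum_integral_fderiv_eq_zero {D : Set (Fin 3 → ℝ)} {a x : Fin 3 → ℝ}
    {u : (Fin 3 → ℝ) → (Fin 3 → ℝ)} (hD : IsOpen D) (ha : StarConvex ℝ a D)
    (hu : ContDiffOn ℝ 1 u D) (hdiv : ∀ z ∈ D, div3 u z = 0) (hx : x ∈ D) :
    diagSum 3 (∫ t in (0 : ℝ)..1, t ^ 2 • fderiv ℝ u (a + t • (x - a))) = 0 := by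
  have hint : IntervalIntegrable (fun t : ℝ => t ^ 2 • fderiv ℝ u (a + t • (x - a))) volume 0 1 :=
    ((continuousOn_id.pow 2).smul ((hu.continuousOn_fderiv_of_isOpen hD le_rfl).comp_ray ha hx)
      ).intervalIntegrable_of_Icc zero_le_one
  rw [← ContinuousLinearMap.intervalIntegral_comp_comm _ hint]
  refine (intervalIntegral.integral_congr fun t ht => ?_).trans intervalIntegral.integral_zero
  rw [uIcc_of_le zero_le_one] at ht
  have hray : a + t • (x - a) ∈ D := ha.add_smul_sub_mem hx ht.1 ht.2
  have hdiff : DifferentiableAt ℝ u (a + t • (x - a)) :=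
    (hu.differentiableOn one_ne_zero).differentiableAt (hD.mem_nhds hray)
  simp only [map_smul, ← div3_eq_diagSum_fderiv hdiff, hdiv _ hray, smul_zero]

theorem poincare_lifting_curl_general (D : Set (Fin 3 → ℝ)) (hD : IsOpen D)
    (a : Fin 3 → ℝ) (ha : a ∈ D)
    (hstar : ∀ x ∈ D, ∀ t ∈ Set.Ioo (0:ℝ) 1, t • a + (1 - t) • x ∈ D)
    (u : (Fin 3 → ℝ) → (Fin 3 → ℝ)) (hu : ContDiffOn ℝ 1 u (closure D))
    (hdiv : ∀ x ∈ D, div3 u x = 0) :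
    ∀ x ∈ D, curl3 (Rlift a u) x = u x := by
  have hDa : StarConvex ℝ a D := (starConvex_iff_forall_pos ha).2 fun y hy s t hs _ hst => by
    obtain rfl : t = 1 - s := by linarith
    exact hstar y hy s ⟨hs, by linarith⟩
  have huD : ContDiffOn ℝ 1 u D := hu.mono subset_closure
  intro x hx
  change curl3 (fun y => cross3 (rayIntegral a u y) (y - a)) x = u x
  rw [curl3_cross3_sub (hasFDerivAt_rayIntegral hD hDa huD hx),
    diagSum_integral_fderiv_eq_zero hD hDa huD hdiv hx, zero_smul, sub_zero,
    two_smul_rayIntegral_add_integral_fderiv_apply hD hDa huD hx]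

/-- For a bounded domain `D ⊂ ℝ³` star-shaped with respect to `a ∈ D`,
and a C¹ divergence-free vector field `u` on the closure of `D`, the Poincaré lifting
satisfies `curl (Rlift a u) = u` on `D`. -/
theorem poincare_lifting_curl (D : Set (Fin 3 → ℝ)) (hD : IsOpen D)
    (hbdd : Bornology.IsBounded D) (a : Fin 3 → ℝ) (ha : a ∈ D)
    (hstar : ∀ x ∈ D, ∀ t ∈ Set.Ioo (0:ℝ) 1, t • a + (1 - t) • x ∈ D)
    (u : (Fin 3 → ℝ) → (Fin 3 → ℝ)) (hu : ContDiffOn ℝ 1 u (closure D))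
    (hdiv : ∀ x ∈ D, div3 u x = 0) :
    ∀ x ∈ D, curl3 (Rlift a u) x = u x :=
  poincare_lifting_curl_general D hD a ha hstar u hu hdiv
end

section
/- The Poincaré lifting R_a maps polynomial vector fields of degree at most p to polynomial vector fields of degree at most p+1. -/
open MeasureTheory

/-!
Recentring a polynomial `q` at `a` and splitting it into homogeneous components `Q k` gives
`q (a + t • (x - a)) = ∑ k, t ^ k * Q k (x - a)`. Hence every weighted integral over `t` of this
expression is the polynomial `∑ k, (∫ w t * t ^ k) • Q k (x - a)` in `x`, of degree at most
`deg q`, and taking the cross product with the affine field `x - a` adds one to the degree.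
-/

open MvPolynomial Finset

namespace MvPolynomial

variable {R σ τ : Type*}

section CommSemiring
variable [CommSemiring R]

theorem eval_bind₁ (x : τ → R) (f : σ → MvPolynomial τ R) (q : MvPolynomial σ R) :
    eval x (bind₁ f q) = eval (fun i => eval x (f i)) q :=
  eval₂Hom_bind₁ _ _ _ _

theorem totalDegree_bind₁_le {n : ℕ} (f : σ → MvPolynomial τ R) (hf : ∀ i, (f i).totalDegree ≤ n)
    (q : MvPolynomial σ R) : (bind₁ f q).totalDegree ≤ q.totalDegree * n := by
  classical
  rw [bind₁, aeval_eq_eval₂Hom, coe_eval₂Hom, eval₂_eq]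
  refine (totalDegree_finsetSum _ _).trans <| Finset.sup_le fun d hd => ?_
  refine (totalDegree_mul _ _).trans ?_
  rw [algebraMap_eq, totalDegree_C, zero_add]
  calc (∏ i ∈ d.support, f i ^ d i).totalDegree
      ≤ ∑ i ∈ d.support, (f i ^ d i).totalDegree := totalDegree_finsetProd _ _
    _ ≤ ∑ i ∈ d.support, d i * n := Finset.sum_le_sum fun i _ =>
        (totalDegree_pow _ _).trans (Nat.mul_le_mul_left _ (hf i))
    _ = (∑ i ∈ d.support, d i) * n := (Finset.sum_mul _ _ _).symm
    _ ≤ q.totalDegree * n := Nat.mul_le_mul_right _ (le_totalDegree hd)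

theorem totalDegree_homogeneousComponent_le (k : ℕ) (φ : MvPolynomial σ R) :
    (homogeneousComponent k φ).totalDegree ≤ φ.totalDegree :=
  totalDegree_le_of_support_subset <| by
    rw [support_homogeneousComponent]; exact Finset.filter_subset _ _

theorem IsHomogeneous.eval_smul {n : ℕ} {φ : MvPolynomial σ R} (hφ : φ.IsHomogeneous n)
    (t : R) (z : σ → R) : eval (t • z) φ = t ^ n * eval z φ := by
  rw [eval_eq, eval_eq, Finset.mul_sum]
  refine Finset.sum_congr rfl fun d hd => ?_
  have hdn : ∑ i ∈ d.support, d i = n := by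
    simpa [Finsupp.weight_apply, Finsupp.sum] using hφ (mem_support_iff.mp hd)
  simp only [Pi.smul_apply, smul_eq_mul, mul_pow, Finset.prod_mul_distrib,
    Finset.prod_pow_eq_pow_sum, hdn]
  ring

theorem totalDegree_X_le (i : σ) : (X i : MvPolynomial σ R).totalDegree ≤ 1 :=
  (totalDegree_monomial_le _ _).trans (by simp)

end CommSemiring

section CommRing
variable [CommRing R]

theorem totalDegree_X_add_C_le (i : σ) (c : R) : (X i + C c : MvPolynomial σ R).totalDegree ≤ 1 :=
  (totalDegree_add _ _).trans (by simpa using totalDegree_X_le i)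

theorem totalDegree_X_sub_C_le (i : σ) (c : R) : (X i - C c : MvPolynomial σ R).totalDegree ≤ 1 :=
  (totalDegree_sub _ _).trans (by simpa using totalDegree_X_le i)

theorem exists_eval_add_smul_sub_eq_sum_pow (a : σ → R) (q : MvPolynomial σ R) :
    ∃ (N : ℕ) (c : ℕ → MvPolynomial σ R), (∀ k, (c k).totalDegree ≤ q.totalDegree) ∧
      ∀ (t : R) (x : σ → R), eval (a + t • (x - a)) q = ∑ k ∈ range N, t ^ k * eval x (c k) := by
  set Q := bind₁ (fun i => X i + C (a i)) q
  have hQ : Q.totalDegree ≤ q.totalDegree := by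
    simpa using totalDegree_bind₁_le _ (fun i => totalDegree_X_add_C_le i (a i)) q
  refine ⟨Q.totalDegree + 1, fun k => bind₁ (fun i => X i - C (a i)) (homogeneousComponent k Q),
    fun k => ?_, fun t x => ?_⟩
  · calc _ ≤ (homogeneousComponent k Q).totalDegree * 1 :=
          totalDegree_bind₁_le _ (fun i => totalDegree_X_sub_C_le i (a i)) _
      _ ≤ Q.totalDegree := by rw [mul_one]; exact totalDegree_homogeneousComponent_le k Q
      _ ≤ q.totalDegree := hQ
  · have hshift : eval (a + t • (x - a)) q = eval (t • (x - a)) Q := by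
      have hpt : (fun i => eval (t • (x - a)) (X i + C (a i))) = a + t • (x - a) := by
        ext i; simp [add_comm]
      rw [eval_bind₁, hpt]
    rw [hshift]
    conv_lhs => rw [← sum_homogeneousComponent Q, map_sum]
    refine Finset.sum_congr rfl fun k _ => ?_
    rw [(homogeneousComponent_isHomogeneous k Q).eval_smul, eval_bind₁]
    have hpt : (fun i => eval x (X i - C (a i))) = x - a := by ext i; simp
    rw [hpt]

end CommRing
end MvPolynomial

open MeasureTheory

theorem intervalIntegral.integral_apply {ι E : Type*} [Fintype ι] [NormedAddCommGroup E]
    [NormedSpace ℝ E] [CompleteSpace E] {μ : Measure ℝ} {f : ℝ → ι → E} {t₀ t₁ : ℝ}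
    (hf : IntervalIntegrable f μ t₀ t₁) (i : ι) :
    (∫ t in t₀..t₁, f t ∂μ) i = ∫ t in t₀..t₁, f t i ∂μ :=
  ((ContinuousLinearMap.proj (R := ℝ) i).intervalIntegral_comp_comm hf).symm

theorem MvPolynomial.exists_integral_mul_eval_add_smul_sub {σ : Type*} {w : ℝ → ℝ} {t₀ t₁ : ℝ}
    (hw : IntervalIntegrable w volume t₀ t₁) (a : σ → ℝ) (q : MvPolynomial σ ℝ) :
    ∃ r : MvPolynomial σ ℝ, r.totalDegree ≤ q.totalDegree ∧
      ∀ x, ∫ t in t₀..t₁, w t * eval (a + t • (x - a)) q = eval x r := by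
  obtain ⟨N, c, hc, hexpand⟩ := exists_eval_add_smul_sub_eq_sum_pow a q
  refine ⟨∑ k ∈ range N, (∫ t in t₀..t₁, w t * t ^ k) • c k,
    (totalDegree_finsetSum _ _).trans <| Finset.sup_le fun k _ =>
      (totalDegree_smul_le _ _).trans (hc k), fun x => ?_⟩
  have hint (k : ℕ) : IntervalIntegrable (fun t => w t * t ^ k * eval x (c k)) volume t₀ t₁ :=
    (hw.mul_continuousOn (continuous_pow k).continuousOn).mul_const _
  simp_rw [hexpand, Finset.mul_sum, ← mul_assoc]
  rw [intervalIntegral.integral_finsetSum fun k _ => hint k, map_sum]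
  simp [intervalIntegral.integral_mul_const, smul_eval]

section IsPoly3

variable {p p' : ℕ}

theorem IsPoly3.sub {f g : (Fin 3 → ℝ) → ℝ} (hf : IsPoly3 p f) (hg : IsPoly3 p g) :
    IsPoly3 p fun x => f x - g x := by
  obtain ⟨q, hq, hfq⟩ := hf
  obtain ⟨r, hr, hgr⟩ := hg
  exact ⟨q - r, (totalDegree_sub _ _).trans (max_le hq hr), fun x => by simp [hfq, hgr]⟩

theorem IsPoly3.mul {f g : (Fin 3 → ℝ) → ℝ} (hf : IsPoly3 p f) (hg : IsPoly3 p' g) :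
    IsPoly3 (p + p') fun x => f x * g x := by
  obtain ⟨q, hq, hfq⟩ := hf
  obtain ⟨r, hr, hgr⟩ := hg
  exact ⟨q * r, (totalDegree_mul _ _).trans (add_le_add hq hr), fun x => by simp [hfq, hgr]⟩

theorem IsPolyVec3.cross3 {u v : (Fin 3 → ℝ) → (Fin 3 → ℝ)} (hu : IsPolyVec3 p u)
    (hv : IsPolyVec3 p' v) : IsPolyVec3 (p + p') fun x => cross3 (u x) (v x) := by
  intro i
  fin_cases i
  · exact ((hu 1).mul (hv 2)).sub ((hu 2).mul (hv 1))
  · exact ((hu 2).mul (hv 0)).sub ((hu 0).mul (hv 2))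
  · exact ((hu 0).mul (hv 1)).sub ((hu 1).mul (hv 0))

theorem isPolyVec3_sub_const (a : Fin 3 → ℝ) : IsPolyVec3 1 fun x => x - a :=
  fun i => ⟨X i - C (a i), totalDegree_X_sub_C_le i (a i), fun x => by simp⟩

theorem IsPolyVec3.integral_smul_comp_add_smul_sub {u : (Fin 3 → ℝ) → (Fin 3 → ℝ)}
    (hu : IsPolyVec3 p u) {w : ℝ → ℝ} {t₀ t₁ : ℝ} (hw : IntervalIntegrable w volume t₀ t₁)
    (a : Fin 3 → ℝ) : IsPolyVec3 p fun x => ∫ t in t₀..t₁, w t • u (a + t • (x - a)) := by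
  choose q hq huq using hu
  have hu_eq : u = fun y j => eval y (q j) := funext fun y => funext fun j => huq j y
  intro j
  obtain ⟨r, hr, hqr⟩ := exists_integral_mul_eval_add_smul_sub hw a (q j)
  refine ⟨r, hr.trans (hq j), fun x => ?_⟩
  have hcont : Continuous fun t : ℝ => u (a + t • (x - a)) := by
    rw [hu_eq]
    exact continuous_pi fun i => (continuous_eval _).comp (by fun_prop)
  beta_reduce
  rw [intervalIntegral.integral_apply (hw.smul_continuousOn hcont.continuousOn), ← hqr]
  simp [huq]

end IsPoly3

/-- The Poincaré lifting `Rlift a` maps polynomial vector fields of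
degree ≤ p to polynomial vector fields of degree ≤ p+1. -/
theorem poincare_lifting_poly (a : Fin 3 → ℝ) (p : ℕ)
    (u : (Fin 3 → ℝ) → (Fin 3 → ℝ)) (hu : IsPolyVec3 p u) :
    IsPolyVec3 (p + 1) (Rlift a u) :=
  (hu.integral_smul_comp_add_smul_sub intervalIntegral.intervalIntegrable_id a).cross3
    (isPolyVec3_sub_const a)
end

section
/- The 2D Poincaré lifting R_a^{2D}(u)(x) := ∫_0^1 t·u(a + t(x-a))·(x-a) dt satisfies div(R_a^{2D} u) = u for all smooth functions u on ℝ². -/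
open MeasureTheory

set_option maxHeartbeats 1000000

/-- Divergence of a planar vector field. -/
noncomputable def div2 (u : (Fin 2 → ℝ) → (Fin 2 → ℝ)) (x : Fin 2 → ℝ) : ℝ :=
  ∑ i, fderiv ℝ (fun y => u y i) x (Pi.single i 1)

/-- The 2D Poincaré lifting with center `a`. -/
noncomputable def Rlift2D (a : Fin 2 → ℝ) (u : (Fin 2 → ℝ) → ℝ)
    (x : Fin 2 → ℝ) : Fin 2 → ℝ :=
  (∫ t in (0:ℝ)..1, t * u (a + t • (x - a))) • (x - a)

section aux

open Metric

variable (a : Fin 2 → ℝ) (u : (Fin 2 → ℝ) → ℝ) (x : Fin 2 → ℝ)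

private noncomputable def Gfun : (Fin 2 → ℝ) → ℝ :=
  fun y => ∫ t in (0:ℝ)..1, t * u (a + t • (y - a))

private noncomputable def Gder : (Fin 2 → ℝ) →L[ℝ] ℝ :=
  ∫ t in (0:ℝ)..1, (t ^ 2) • fderiv ℝ u (a + t • (x - a))

variable {a u x}

lemma pcont (y : Fin 2 → ℝ) : Continuous (fun t : ℝ => a + t • (y - a)) :=
  continuous_const.add (continuous_id.smul continuous_const)

lemma comp_hasFDerivAt (hu : ContDiff ℝ (⊤ : ℕ∞) u) (t : ℝ) (y : Fin 2 → ℝ) :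
    HasFDerivAt (fun z : Fin 2 → ℝ => t * u (a + t • (z - a)))
      ((t ^ 2) • fderiv ℝ u (a + t • (y - a))) y := by
  have h1 : HasFDerivAt (fun z : Fin 2 → ℝ => a + t • (z - a))
      (t • ContinuousLinearMap.id ℝ (Fin 2 → ℝ)) y :=
    (((hasFDerivAt_id y).sub_const a).const_smul t).const_add a
  have h2 := ((hu.differentiable (by simp) (a + t • (y - a))).hasFDerivAt).comp y h1
  have h3 := h2.const_smul t
  have heq : (t • ((fderiv ℝ u (a + t • (y - a))).comp
      (t • ContinuousLinearMap.id ℝ (Fin 2 → ℝ)))) = (t ^ 2) • fderiv ℝ u (a + t • (y - a)) := by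
    ext v
    simp [mul_comm, sq, mul_assoc, mul_left_comm]
  rw [heq] at h3
  exact h3

lemma Gfun_hasFDerivAt (hu : ContDiff ℝ (⊤ : ℕ∞) u) :
    HasFDerivAt (Gfun a u) (Gder a u x) x := by
  have hcf : Continuous (fderiv ℝ u) := hu.continuous_fderiv (by simp)
  have hq : Continuous (fun q : ℝ × (Fin 2 → ℝ) => a + q.1 • (q.2 - a)) :=
    continuous_const.add (continuous_fst.smul (continuous_snd.sub continuous_const))
  have hK : IsCompact ((fun q : ℝ × (Fin 2 → ℝ) => a + q.1 • (q.2 - a)) ''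
      (Set.Icc (0:ℝ) 1 ×ˢ closedBall x 1)) :=
    ((isCompact_Icc).prod (isCompact_closedBall x 1)).image hq
  obtain ⟨C, hC⟩ := hK.exists_bound_of_continuousOn hcf.continuousOn
  apply intervalIntegral.hasFDerivAt_integral_of_dominated_of_fderiv_le
    (μ := volume)
    (F := fun y t => t * u (a + t • (y - a)))
    (F' := fun y t => (t ^ 2) • fderiv ℝ u (a + t • (y - a)))
    (bound := fun _ => C) (ball_mem_nhds x one_pos)
  · filter_upwards with y
    exact (continuous_id.mul (hu.continuous.comp (pcont y))).aestronglyMeasurable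
  · exact (continuous_id.mul (hu.continuous.comp (pcont x))).intervalIntegrable 0 1
  · exact (((continuous_id.pow 2).smul (hcf.comp (pcont x)))).aestronglyMeasurable
  · filter_upwards with t ht y hy
    rw [Set.uIoc_of_le (by norm_num : (0:ℝ) ≤ 1)] at ht
    have ht0 : 0 ≤ t := le_of_lt ht.1
    have ht1 : t ≤ 1 := ht.2
    have hmem : a + t • (y - a) ∈ (fun q : ℝ × (Fin 2 → ℝ) => a + q.1 • (q.2 - a)) ''
        (Set.Icc (0:ℝ) 1 ×ˢ closedBall x 1) :=
      ⟨(t, y), ⟨⟨ht0, ht1⟩, ball_subset_closedBall hy⟩, rfl⟩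
    have hb := hC _ hmem
    have hns : ‖(t ^ 2) • fderiv ℝ u (a + t • (y - a))‖
        = t ^ 2 * ‖fderiv ℝ u (a + t • (y - a))‖ := by
      rw [norm_smul]; simp [abs_of_nonneg (sq_nonneg t)]
    rw [hns]
    calc t ^ 2 * ‖fderiv ℝ u (a + t • (y - a))‖
        ≤ 1 * ‖fderiv ℝ u (a + t • (y - a))‖ := by
          apply mul_le_mul_of_nonneg_right _ (norm_nonneg _)
          nlinarith
      _ ≤ C := by simpa using hb
  · exact intervalIntegrable_const
  · filter_upwards with t _ y _
    exact comp_hasFDerivAt hu t y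

end aux

/-- The 2D Poincaré lifting satisfies `div (Rlift2D a u) = u`
for all smooth `u : ℝ² → ℝ`. -/
theorem Rlift2D_div (a : Fin 2 → ℝ) (u : (Fin 2 → ℝ) → ℝ) (hu : ContDiff ℝ (⊤ : ℕ∞) u) :
    ∀ x, div2 (Rlift2D a u) x = u x := by
  intro x
  set p : ℝ → (Fin 2 → ℝ) := fun t => a + t • (x - a) with hp
  have hpc : Continuous p := pcont x
  have hcf : Continuous (fderiv ℝ u) := hu.continuous_fderiv (by simp)
  set φ : ℝ → ℝ := fun t => u (p t) with hφ
  set φ' : ℝ → ℝ := fun t => fderiv ℝ u (p t) (x - a) with hφ'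
  have hφc : Continuous φ := hu.continuous.comp hpc
  have hφ'c : Continuous φ' := (hcf.comp hpc).clm_apply continuous_const
  -- derivative of φ
  have hpderiv : ∀ t, HasDerivAt p (x - a) t := by
    intro t
    have := ((hasDerivAt_id t).smul_const (x - a)).const_add a
    simpa [hp] using this
  have hφderiv : ∀ t, HasDerivAt φ (φ' t) t := fun t =>
    ((hu.differentiable (by simp) (p t)).hasFDerivAt).comp_hasDerivAt t (hpderiv t)
  -- the main G derivative
  have hG := Gfun_hasFDerivAt (a := a) (u := u) (x := x) hu
  -- integrability of the CLM-valued integrand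
  have hint : IntervalIntegrable (fun t => (t ^ 2) • fderiv ℝ u (p t)) volume 0 1 :=
    ((continuous_id.pow 2).smul (hcf.comp hpc)).intervalIntegrable 0 1
  have happly : Gder a u x (x - a) = ∫ t in (0:ℝ)..1, t ^ 2 * φ' t := by
    rw [Gder, ContinuousLinearMap.intervalIntegral_apply hint]
    simp [φ', hp]
  -- FTC computation
  have hFTC : (∫ t in (0:ℝ)..1, (2 * t * φ t + t ^ 2 * φ' t)) = u x := by
    have hderiv : ∀ t ∈ Set.uIcc (0:ℝ) 1,
        HasDerivAt (fun s => s ^ 2 * φ s) (2 * t * φ t + t ^ 2 * φ' t) t := by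
      intro t _
      have h1 : HasDerivAt (fun s : ℝ => s ^ 2) (2 * t) t := by
        simpa using (hasDerivAt_pow 2 t)
      simpa [mul_comm, mul_left_comm] using (show HasDerivAt (fun s => s ^ 2 * φ s) _ t from h1.mul (hφderiv t))
    have hcont : IntervalIntegrable (fun t => 2 * t * φ t + t ^ 2 * φ' t) volume 0 1 :=
      (((continuous_const.mul continuous_id).mul hφc).add
        ((continuous_id.pow 2).mul hφ'c)).intervalIntegrable 0 1
    rw [intervalIntegral.integral_eq_sub_of_hasDerivAt hderiv hcont]
    simp [φ, p]
  -- compute each partial derivative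
  have hcomp : ∀ i : Fin 2, (fun y => Rlift2D a u y i)
      = fun y => Gfun a u y * (y i - a i) := by
    intro i
    funext y
    simp [Rlift2D, Gfun, Pi.smul_apply, smul_eq_mul]
  have hpart : ∀ i : Fin 2,
      fderiv ℝ (fun y => Rlift2D a u y i) x (Pi.single i 1)
        = Gfun a u x + (x i - a i) * Gder a u x (Pi.single i 1) := by
    intro i
    rw [hcomp i]
    have hproj : HasFDerivAt (fun y : Fin 2 → ℝ => y i - a i)
        (ContinuousLinearMap.proj (R := ℝ) (φ := fun _ : Fin 2 => ℝ) i) x :=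
      ((ContinuousLinearMap.proj (R := ℝ) (φ := fun _ : Fin 2 => ℝ) i).hasFDerivAt).sub_const
        (a i)
    have hmul := hG.mul hproj
    rw [(show HasFDerivAt (fun y => Gfun a u y * (y i - a i)) _ x from hmul).fderiv]
    simp [smul_eq_mul, mul_comm]
  -- vector identity
  have hvec : (x - a) = (x 0 - a 0) • (Pi.single (0 : Fin 2) (1:ℝ) : Fin 2 → ℝ)
      + (x 1 - a 1) • (Pi.single (1 : Fin 2) (1:ℝ) : Fin 2 → ℝ) := by
    funext i
    fin_cases i <;> simp [Pi.single_apply]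
  have hGx : Gfun a u x = ∫ t in (0:ℝ)..1, t * φ t := by
    simp [Gfun, φ, p]
  calc div2 (Rlift2D a u) x
      = ∑ i : Fin 2, (Gfun a u x + (x i - a i) * Gder a u x (Pi.single i 1)) := by
        unfold div2; exact Finset.sum_congr rfl fun i _ => hpart i
    _ = 2 * Gfun a u x + Gder a u x (x - a) := by
        rw [hvec]
        simp only [Fin.sum_univ_two, map_add, ContinuousLinearMap.map_smul, smul_eq_mul]
        ring
    _ = (∫ t in (0:ℝ)..1, 2 * (t * φ t)) + ∫ t in (0:ℝ)..1, t ^ 2 * φ' t := by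
        rw [happly, hGx, intervalIntegral.integral_const_mul]
    _ = ∫ t in (0:ℝ)..1, (2 * t * φ t + t ^ 2 * φ' t) := by
        rw [← intervalIntegral.integral_add]
        · simp [mul_assoc]
        · exact (continuous_const.mul (continuous_id.mul hφc)).intervalIntegrable 0 1
        · exact ((continuous_id.pow 2).mul hφ'c).intervalIntegrable 0 1
    _ = u x := hFTC
end

section
/- The second-family Nédélec (face element) space W²_p(T) = {v : v(x) = p(x) + q(x)·x, p ∈ 𝐏_p, q ∈ P_p} equals 𝐏_p(ℝ³) + D_a(P_p(ℝ³)) for any point a, where D_a is the degree-2 Poincaré lifting. -/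
open MeasureTheory

/-!
Write `x = a + y` and let `c(x) = ∫₀¹ t² u(a + t y) dt`, so that `D_a u (x) = c(x) • (x - a)`.
On a monomial of degree `k` in `y` the map `u ↦ c` is multiplication by `1 / (k + 3)`, hence it
maps the polynomials of degree `≤ p` onto themselves. Since `c(x) • (x - a) = c(x) • x - c(x) • a`
and `c • a` is a polynomial field of degree `≤ p` whenever `c` is a polynomial of degree `≤ p`,
both spaces are `𝐏_p + {c(x) • x : c ∈ P_p}`.
-/

namespace MvPolynomial

variable {σ τ R : Type*} [CommSemiring R]

theorem totalDegree_bind₁_le_of_totalDegree_le_one {f : σ → MvPolynomial τ R}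
    (hf : ∀ i, (f i).totalDegree ≤ 1) (φ : MvPolynomial σ R) :
    (bind₁ f φ).totalDegree ≤ φ.totalDegree := by
  conv_lhs => rw [φ.as_sum, map_sum]
  refine totalDegree_finsetSum_le fun d hd => ?_
  rw [bind₁_monomial]
  calc (C (coeff d φ) * ∏ i ∈ d.support, f i ^ d i).totalDegree
      ≤ ∑ i ∈ d.support, (f i ^ d i).totalDegree :=
        (totalDegree_mul _ _).trans (by simpa using totalDegree_finsetProd _ _)
    _ ≤ ∑ i ∈ d.support, d i :=
        Finset.sum_le_sum fun i _ => (totalDegree_pow _ _).trans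
          (by simpa using Nat.mul_le_mul_left (d i) (hf i))
    _ ≤ φ.totalDegree := le_totalDegree hd

noncomputable def scaleByDegree (w : ℕ → R) (φ : MvPolynomial σ R) : MvPolynomial σ R :=
  ∑ d ∈ φ.support, monomial d (w d.degree * coeff d φ)

theorem coeff_scaleByDegree (w : ℕ → R) (φ : MvPolynomial σ R) (d : σ →₀ ℕ) :
    coeff d (scaleByDegree w φ) = w d.degree * coeff d φ := by
  classical
  simp only [scaleByDegree, coeff_sum, coeff_monomial, Finset.sum_ite_eq', mem_support_iff]
  split_ifs with h
  · rfl
  · simp [not_not.mp h]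

theorem totalDegree_scaleByDegree_le (w : ℕ → R) (φ : MvPolynomial σ R) :
    (scaleByDegree w φ).totalDegree ≤ φ.totalDegree :=
  totalDegree_finsetSum_le fun _ hd => (totalDegree_monomial_le _ _).trans (le_totalDegree hd)

theorem scaleByDegree_scaleByDegree (w w' : ℕ → R) (φ : MvPolynomial σ R) :
    scaleByDegree w (scaleByDegree w' φ) = scaleByDegree (w * w') φ := by
  ext d
  simp only [coeff_scaleByDegree, Pi.mul_apply, mul_assoc]

theorem scaleByDegree_one (φ : MvPolynomial σ R) : scaleByDegree 1 φ = φ := by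
  ext d
  simp [coeff_scaleByDegree]

theorem eval_scaleByDegree (w : ℕ → R) (φ : MvPolynomial σ R) (y : σ → R) :
    eval y (scaleByDegree w φ) =
      ∑ d ∈ φ.support, w d.degree * eval y (monomial d (coeff d φ)) := by
  simp only [scaleByDegree, map_sum, eval_monomial, mul_assoc]

theorem eval_smul_eq_sum (t : R) (y : σ → R) (φ : MvPolynomial σ R) :
    eval (t • y) φ = ∑ d ∈ φ.support, t ^ d.degree * eval y (monomial d (coeff d φ)) := by
  conv_lhs => rw [φ.as_sum]
  simp only [map_sum, eval_monomial, Pi.smul_apply, smul_eq_mul, mul_pow, Finsupp.prod_mul]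
  refine Finset.sum_congr rfl fun d _ => ?_
  rw [Finsupp.prod, Finset.prod_pow_eq_pow_sum, Finsupp.degree_apply]
  ring

theorem exists_eval_add_eq (c : σ → R) (φ : MvPolynomial σ R) :
    ∃ ψ : MvPolynomial σ R, ψ.totalDegree ≤ φ.totalDegree ∧ ∀ x, eval x ψ = eval (x + c) φ := by
  refine ⟨bind₁ (fun i => X i + C (c i)) φ,
    totalDegree_bind₁_le_of_totalDegree_le_one (fun i => ?_) φ, fun x => ?_⟩
  · exact (totalDegree_add _ _).trans
      (max_le ((totalDegree_monomial_le (Finsupp.single i 1) (1 : R)).trans (by simp)) (by simp))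
  · show eval₂Hom (RingHom.id R) x _ = eval₂Hom (RingHom.id R) (x + c) φ
    rw [eval₂Hom_bind₁]
    congr 2
    funext i
    simp [add_comm]

theorem integral_sq_mul_eval_smul (φ : MvPolynomial σ ℝ) (y : σ → ℝ) :
    ∫ t in (0 : ℝ)..1, t ^ 2 * eval (t • y) φ =
      eval y (scaleByDegree (fun k => ((k : ℝ) + 3)⁻¹) φ) := by
  simp only [eval_smul_eq_sum, eval_scaleByDegree, Finset.mul_sum]
  rw [intervalIntegral.integral_finsetSum fun _ _ =>
    Continuous.intervalIntegrable (by fun_prop) _ _]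
  refine Finset.sum_congr rfl fun d _ => ?_
  simp only [← mul_assoc, ← pow_add]
  rw [intervalIntegral.integral_mul_const, integral_pow]
  push_cast
  ring

end MvPolynomial

open MvPolynomial

noncomputable def radialMoment {σ : Type*} (a : σ → ℝ) (u : (σ → ℝ) → ℝ) (x : σ → ℝ) : ℝ :=
  ∫ t in (0 : ℝ)..1, t ^ 2 * u (a + t • (x - a))

theorem radialMoment_eval_sub {σ : Type*} (a : σ → ℝ) (ψ : MvPolynomial σ ℝ) :
    radialMoment a (fun z => eval (z - a) ψ) =
      fun x => eval (x - a) (scaleByDegree (fun k => ((k : ℝ) + 3)⁻¹) ψ) := by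
  funext x
  simp only [radialMoment, add_sub_cancel_left, integral_sq_mul_eval_smul]

theorem Dlift_eq_radialMoment_smul (a : Fin 3 → ℝ) (u : (Fin 3 → ℝ) → ℝ) (x : Fin 3 → ℝ) :
    Dlift a u x = radialMoment a u x • (x - a) := rfl

section

variable {p : ℕ}

theorem IsPoly3.add {f g : (Fin 3 → ℝ) → ℝ} (hf : IsPoly3 p f) (hg : IsPoly3 p g) :
    IsPoly3 p (fun x => f x + g x) := by
  obtain ⟨φ, hφ, hf⟩ := hf
  obtain ⟨ψ, hψ, hg⟩ := hg
  exact ⟨φ + ψ, (totalDegree_add _ _).trans (max_le hφ hψ), fun x => by simp [hf, hg]⟩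

theorem IsPoly3.mul_const {f : (Fin 3 → ℝ) → ℝ} (hf : IsPoly3 p f) (c : ℝ) :
    IsPoly3 p (fun x => f x * c) := by
  obtain ⟨φ, hφ, hf⟩ := hf
  exact ⟨φ * C c, (totalDegree_mul _ _).trans (by simpa using hφ), fun x => by simp [hf]⟩

theorem IsPoly3.comp_sub {f : (Fin 3 → ℝ) → ℝ} (hf : IsPoly3 p f) (c : Fin 3 → ℝ) :
    IsPoly3 p (fun x => f (x - c)) := by
  obtain ⟨φ, hφ, hf⟩ := hf
  obtain ⟨ψ, hψ, hψφ⟩ := exists_eval_add_eq (-c) φ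
  exact ⟨ψ, hψ.trans hφ, fun x => (hf _).trans (by rw [hψφ, sub_eq_add_neg])⟩

theorem IsPolyVec3.add_smul_const {P : (Fin 3 → ℝ) → Fin 3 → ℝ} {q : (Fin 3 → ℝ) → ℝ}
    (hP : IsPolyVec3 p P) (hq : IsPoly3 p q) (c : Fin 3 → ℝ) :
    IsPolyVec3 p (fun x => P x + q x • c) :=
  fun i => (hP i).add (hq.mul_const (c i))

theorem IsPoly3.exists_eq_eval_sub {u : (Fin 3 → ℝ) → ℝ} (hu : IsPoly3 p u) (a : Fin 3 → ℝ) :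
    ∃ ψ : MvPolynomial (Fin 3) ℝ, ψ.totalDegree ≤ p ∧ u = fun z => eval (z - a) ψ := by
  obtain ⟨φ, hφ, hu⟩ := hu
  obtain ⟨ψ, hψ, hψφ⟩ := exists_eval_add_eq a φ
  exact ⟨ψ, hψ.trans hφ, funext fun z => by rw [hu, hψφ, sub_add_cancel]⟩

theorem isPoly3_radialMoment {u : (Fin 3 → ℝ) → ℝ} (hu : IsPoly3 p u) (a : Fin 3 → ℝ) :
    IsPoly3 p (radialMoment a u) := by
  obtain ⟨ψ, hψ, rfl⟩ := hu.exists_eq_eval_sub a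
  have hscaled : IsPoly3 p (eval · (scaleByDegree (fun k => ((k : ℝ) + 3)⁻¹) ψ)) :=
    ⟨_, (totalDegree_scaleByDegree_le _ ψ).trans hψ, fun _ => rfl⟩
  rw [radialMoment_eval_sub]
  exact hscaled.comp_sub a

theorem IsPoly3.exists_radialMoment_eq {v : (Fin 3 → ℝ) → ℝ} (hv : IsPoly3 p v) (a : Fin 3 → ℝ) :
    ∃ u, IsPoly3 p u ∧ radialMoment a u = v := by
  obtain ⟨ψ, hψ, rfl⟩ := hv.exists_eq_eval_sub a
  set χ := scaleByDegree (fun k => (k : ℝ) + 3) ψ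
  have hχ : IsPoly3 p (eval · χ) := ⟨χ, (totalDegree_scaleByDegree_le _ ψ).trans hψ, fun _ => rfl⟩
  have hw : (fun k : ℕ => ((k : ℝ) + 3)⁻¹) * (fun k : ℕ => (k : ℝ) + 3) = 1 :=
    funext fun k => inv_mul_cancel₀ (by positivity)
  refine ⟨fun z => eval (z - a) χ, hχ.comp_sub a, ?_⟩
  rw [radialMoment_eval_sub, scaleByDegree_scaleByDegree, hw, scaleByDegree_one]

end

/-- `W²_p(T) = 𝐏_p(ℝ³) + D_a(P_p(ℝ³))` for any point `a`. -/
theorem nedelecW2_eq_poly_add_lift (p : ℕ) (a : Fin 3 → ℝ) :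
    NedelecW2 p =
      {v | ∃ P q, IsPolyVec3 p P ∧ IsPoly3 p q ∧
        ∀ x, v x = P x + Dlift a q x} := by
  ext v
  constructor
  · rintro ⟨P, q, hP, hq, hv⟩
    obtain ⟨u, hu, rfl⟩ := hq.exists_radialMoment_eq a
    refine ⟨fun x => P x + radialMoment a u x • a, u, hP.add_smul_const hq a, hu, fun x => ?_⟩
    simp only [hv, Dlift_eq_radialMoment_smul, smul_sub]
    abel
  · rintro ⟨P, u, hP, hu, hv⟩
    refine ⟨fun x => P x + radialMoment a u x • -a, radialMoment a u,
      hP.add_smul_const (isPoly3_radialMoment hu a) (-a), isPoly3_radialMoment hu a, fun x => ?_⟩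
    simp only [hv, Dlift_eq_radialMoment_smul, smul_sub, smul_neg]
    abel
end

section
/- The sequence constants → P_{p+1}(T) →(grad) W¹_p(T) →(curl) W²_p(T) →(div) P_p(T) → 0 is exact: the gradient of P_{p+1} is exactly the kernel of curl in W¹_p(T), curl W¹_p(T) is exactly the kernel of div in W²_p(T), and div maps W²_p(T) onto P_p(T). -/
open MeasureTheory

/-!
All fields involved are evaluations of vectors of real polynomials, and `grad3`, `curl3`, `div3`
evaluate the formal operators `grad`, `curl`, `divergence` on them, so exactness is a statement
about polynomials. It follows from the Koszul homotopy. Let `E = ∑ xᵢ ∂ᵢ` be the Euler operator,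
which multiplies a homogeneous polynomial of degree `m` by `m`, so that `E + k` (`k ≥ 1`) is
inverted by dividing the degree-`m` part by `m + k`. Then
* `∂ⱼ (x ⬝ u) = (E + 1) uⱼ` when `curl u = 0`; as `∂ⱼ (E + k)⁻¹ = (E + k + 1)⁻¹ ∂ⱼ`, this gives
  `u = grad (E⁻¹ (x ⬝ u))`, where `x ⬝ u` has no constant term;
* `curl (w × x) = (E + 2) w - (div w) x`, hence `v = curl (((E + 2)⁻¹ v) × x)` when `div v = 0`;
* `div (f x) = (E + 3) f`, hence `f = div (((E + 3)⁻¹ f) x)`.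
The degree bounds of `W¹_p` and `W²_p` are kept because `x ⬝ (q × x) = 0` and `(g x) × x = 0`
remove the parts of degree `p + 1`.
-/

open MvPolynomial Matrix

namespace MvPolynomial

section Degree

variable {σ R : Type*} [CommSemiring R]

theorem pderiv_pderiv_comm (i j : σ) (f : MvPolynomial σ R) :
    pderiv i (pderiv j f) = pderiv j (pderiv i f) := by
  classical
  ext m
  simp only [coeff_pderiv, add_right_comm m (Finsupp.single i 1)]
  rcases eq_or_ne i j with rfl | hij
  · rfl
  · simp [hij, hij.symm, mul_right_comm]

variable {n : ℕ} {f g : MvPolynomial σ R}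

theorem restrictTotalDegree_mono : Monotone (restrictTotalDegree σ R) := fun m n hmn f hf => by
  rw [mem_restrictTotalDegree] at *
  exact hf.trans hmn

theorem mem_restrictTotalDegree_of_coeff_eq_zero (hf : f ∈ restrictTotalDegree σ R n)
    (h : ∀ m, coeff m f = 0 → coeff m g = 0) : g ∈ restrictTotalDegree σ R n := by
  rw [mem_restrictTotalDegree] at *
  refine (totalDegree_le_of_support_subset fun m hm => ?_).trans hf
  rw [mem_support_iff] at *
  exact fun h' => hm (h m h')

theorem pderiv_mem_restrictTotalDegree (i : σ) (hf : f ∈ restrictTotalDegree σ R (n + 1)) :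
    pderiv i f ∈ restrictTotalDegree σ R n := by
  classical
  rw [mem_restrictTotalDegree] at *
  refine Finset.sup_le fun m hm => ?_
  rw [mem_support_iff, coeff_pderiv] at hm
  have hle : (m + Finsupp.single i 1).degree ≤ n + 1 :=
    (le_totalDegree (mem_support_iff.2 (left_ne_zero_of_mul hm))).trans hf
  rw [map_add, Finsupp.degree_single] at hle
  exact Nat.le_of_succ_le_succ hle

theorem X_mul_mem_restrictTotalDegree (i : σ) (hf : f ∈ restrictTotalDegree σ R n) :
    X i * f ∈ restrictTotalDegree σ R (n + 1) := by
  rw [mem_restrictTotalDegree] at *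
  refine (totalDegree_mul _ _).trans ?_
  have : (X i : MvPolynomial σ R).totalDegree ≤ 1 :=
    (totalDegree_monomial_le _ _).trans_eq (by simp)
  omega

end Degree

section Euler

variable {σ R : Type*} [CommSemiring R] [Fintype σ]

noncomputable def euler : Derivation R (MvPolynomial σ R) (MvPolynomial σ R) :=
  ∑ i : σ, (X i : MvPolynomial σ R) • pderiv i

theorem euler_apply (f : MvPolynomial σ R) : euler f = ∑ i, X i * pderiv i f := by
  rw [euler, ← Derivation.coeFnAddMonoidHom_apply, map_sum, Finset.sum_apply]
  rfl

theorem euler_monomial (d : σ →₀ ℕ) (r : R) : euler (monomial d r) = d.degree • monomial d r := by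
  simp only [euler_apply, X_mul_pderiv_monomial, ← Finset.sum_smul, Finsupp.degree_eq_sum]

theorem coeff_euler (d : σ →₀ ℕ) (f : MvPolynomial σ R) :
    coeff d (euler f) = d.degree * coeff d f := by
  induction f using induction_on' with
  | monomial e r =>
    classical
    rw [euler_monomial, coeff_smul, coeff_monomial]
    split_ifs with h <;> simp [h, nsmul_eq_mul]
  | add f g hf hg => simp [hf, hg, mul_add]

theorem euler_mem_restrictTotalDegree {n : ℕ} {f : MvPolynomial σ R}
    (hf : f ∈ restrictTotalDegree σ R n) : euler f ∈ restrictTotalDegree σ R n :=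
  mem_restrictTotalDegree_of_coeff_eq_zero hf fun m h => by rw [coeff_euler, h, mul_zero]

end Euler

section RadialAverage

variable {σ K : Type*} [Field K]

/-- `radialAverage k f` is `x ↦ ∫₀¹ t ^ (k - 1) f (t • x) dt` (the weights of `Rlift` and `Dlift`
are `k = 2, 3`): it divides the monomials of degree `m` by `m + k`. For `k = 0` the constant term
is divided by zero, i.e. dropped. -/
noncomputable def radialAverage (k : ℕ) : MvPolynomial σ K →ₗ[K] MvPolynomial σ K :=
  (basisMonomials σ K).constr K fun d => monomial d (d.degree + k : K)⁻¹

theorem radialAverage_monomial (k : ℕ) (d : σ →₀ ℕ) (r : K) :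
    radialAverage k (monomial d r) = monomial d (r / (d.degree + k)) := by
  have : monomial d r = r • basisMonomials σ K d := by simp [coe_basisMonomials, smul_monomial]
  rw [this, map_smul, radialAverage, Module.Basis.constr_basis, smul_monomial, smul_eq_mul,
    div_eq_mul_inv]

theorem coeff_radialAverage (k : ℕ) (d : σ →₀ ℕ) (f : MvPolynomial σ K) :
    coeff d (radialAverage k f) = coeff d f / (d.degree + k) := by
  classical
  induction f using induction_on' with
  | monomial e r =>
    rw [radialAverage_monomial, coeff_monomial, coeff_monomial]
    split_ifs with h <;> simp [h]
  | add f g hf hg => simp [hf, hg, add_div]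

theorem radialAverage_mem_restrictTotalDegree (k : ℕ) {n : ℕ} {f : MvPolynomial σ K}
    (hf : f ∈ restrictTotalDegree σ K n) : radialAverage k f ∈ restrictTotalDegree σ K n :=
  mem_restrictTotalDegree_of_coeff_eq_zero hf fun m h => by rw [coeff_radialAverage, h, zero_div]

theorem pderiv_radialAverage (k : ℕ) (i : σ) (f : MvPolynomial σ K) :
    pderiv i (radialAverage k f) = radialAverage (k + 1) (pderiv i f) := by
  classical
  ext m
  simp only [coeff_pderiv, coeff_radialAverage, map_add, Finsupp.degree_single]
  push_cast
  ring

theorem radialAverage_X_mul (k : ℕ) (i : σ) (f : MvPolynomial σ K) :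
    radialAverage k (X i * f) = X i * radialAverage (k + 1) f := by
  induction f using induction_on' with
  | monomial d r =>
    simp only [X, monomial_mul, one_mul, radialAverage_monomial, map_add, Finsupp.degree_single]
    push_cast
    ring_nf
  | add f g hf hg => simp only [mul_add, map_add, hf, hg]

variable [CharZero K] {k : ℕ}

private theorem degree_add_ne_zero (hk : k ≠ 0) (d : σ →₀ ℕ) : (d.degree + k : K) ≠ 0 := by
  exact_mod_cast (by omega : d.degree + k ≠ 0)

variable [Fintype σ]

theorem euler_radialAverage_add (hk : k ≠ 0) (f : MvPolynomial σ K) :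
    euler (radialAverage k f) + k • radialAverage k f = f := by
  ext d
  have := degree_add_ne_zero (K := K) hk d
  simp only [coeff_add, coeff_euler, coeff_smul, coeff_radialAverage]
  rw [nsmul_eq_mul]
  field_simp

theorem radialAverage_euler_add (hk : k ≠ 0) (f : MvPolynomial σ K) :
    radialAverage k (euler f + k • f) = f := by
  ext d
  have := degree_add_ne_zero (K := K) hk d
  simp only [coeff_add, coeff_euler, coeff_smul, coeff_radialAverage]
  rw [nsmul_eq_mul]
  field_simp

end RadialAverage

section VectorCalculus

variable {σ R : Type*}

section CommSemiring

variable [CommSemiring R]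

noncomputable def grad (f : MvPolynomial σ R) : σ → MvPolynomial σ R := fun i => pderiv i f

variable [Fintype σ]

noncomputable def divergence (U : σ → MvPolynomial σ R) : MvPolynomial σ R := ∑ i, pderiv i (U i)

theorem divergence_add (U V : σ → MvPolynomial σ R) :
    divergence (U + V) = divergence U + divergence V := by
  simp [divergence, Finset.sum_add_distrib]

theorem divergence_mem_restrictTotalDegree {n : ℕ} {U : σ → MvPolynomial σ R}
    (hU : ∀ i, U i ∈ restrictTotalDegree σ R (n + 1)) : divergence U ∈ restrictTotalDegree σ R n :=
  Submodule.sum_mem _ fun i _ => pderiv_mem_restrictTotalDegree i (hU i)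

theorem divergence_mul_X (q : MvPolynomial σ R) :
    divergence (fun i => q * X i) = euler q + Fintype.card σ • q := by
  simp [divergence, euler_apply, Finset.sum_add_distrib, mul_comm, add_comm]

theorem pderiv_dotProduct_X (U : σ → MvPolynomial σ R) (j : σ) :
    pderiv j (X ⬝ᵥ U) = U j + ∑ i, X i * pderiv j (U i) := by
  classical
  simp [dotProduct, Pi.single_apply, Finset.sum_add_distrib, add_comm]

end CommSemiring

variable [CommRing R]

noncomputable def curl (U : Fin 3 → MvPolynomial (Fin 3) R) : Fin 3 → MvPolynomial (Fin 3) R :=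
  ![pderiv 1 (U 2) - pderiv 2 (U 1), pderiv 2 (U 0) - pderiv 0 (U 2),
    pderiv 0 (U 1) - pderiv 1 (U 0)]

theorem curl_add (U V : Fin 3 → MvPolynomial (Fin 3) R) : curl (U + V) = curl U + curl V := by
  ext1 i
  fin_cases i <;>
    simp only [curl, Pi.add_apply, map_add, Fin.isValue, Fin.zero_eta, Fin.mk_one, Fin.reduceFinMk,
      cons_val_zero, cons_val_one, cons_val] <;> abel

theorem curl_mem_restrictTotalDegree {n : ℕ} {U : Fin 3 → MvPolynomial (Fin 3) R}
    (hU : ∀ i, U i ∈ restrictTotalDegree (Fin 3) R (n + 1)) (i : Fin 3) :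
    curl U i ∈ restrictTotalDegree (Fin 3) R n := by
  fin_cases i <;>
    exact sub_mem (pderiv_mem_restrictTotalDegree _ (hU _))
      (pderiv_mem_restrictTotalDegree _ (hU _))

theorem curl_grad (f : MvPolynomial (Fin 3) R) : curl (grad f) = 0 := by
  ext1 i
  fin_cases i <;> simp [curl, grad, pderiv_pderiv_comm _ _ f]

theorem divergence_curl (U : Fin 3 → MvPolynomial (Fin 3) R) : divergence (curl U) = 0 := by
  simp only [divergence, curl, Fin.sum_univ_three, Fin.isValue, cons_val_zero, cons_val_one,
    cons_val, map_sub]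
  rw [pderiv_pderiv_comm 1 0, pderiv_pderiv_comm 2 0, pderiv_pderiv_comm 2 1]
  abel

theorem pderiv_comm_of_curl_eq_zero {U : Fin 3 → MvPolynomial (Fin 3) R} (h : curl U = 0)
    (i j : Fin 3) : pderiv i (U j) = pderiv j (U i) := by
  have h0 := congrFun h 0
  have h1 := congrFun h 1
  have h2 := congrFun h 2
  simp only [curl, Fin.isValue, cons_val_zero, cons_val_one, cons_val, Pi.zero_apply,
    sub_eq_zero] at h0 h1 h2
  fin_cases i <;> fin_cases j <;> simp [h0, h1, h2]

theorem curl_cross_X (Q : Fin 3 → MvPolynomial (Fin 3) R) (i : Fin 3) :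
    curl (Q ⨯₃ X) i = euler (Q i) + 2 • Q i - divergence Q * X i := by
  fin_cases i <;>
    simp only [curl, divergence, euler_apply, cross_apply, Fin.sum_univ_three, Fin.isValue,
      Fin.zero_eta, Fin.mk_one, Fin.reduceFinMk, cons_val_zero, cons_val_one, cons_val, map_sub,
      pderiv_mul, pderiv_X_self, pderiv_X_of_ne, ne_eq, Fin.reduceEq, not_false_eq_true] <;> ring

end VectorCalculus

section Exactness

variable {K : Type*} [Field K]

theorem radialAverage_mul_X_cross_X (q : MvPolynomial (Fin 3) K) :
    (fun i => radialAverage 2 (q * X i)) ⨯₃ X = 0 := by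
  have : (fun i => radialAverage 2 (q * X i)) = radialAverage 3 q • X := by
    ext1 i
    rw [mul_comm, radialAverage_X_mul, Pi.smul_apply, smul_eq_mul, mul_comm]
  rw [this, LinearMap.map_smul₂, cross_self, smul_zero]

variable [CharZero K]

theorem grad_radialAverage_dotProduct_X {U : Fin 3 → MvPolynomial (Fin 3) K}
    (hU : curl U = 0) : grad (radialAverage 0 (X ⬝ᵥ U)) = U := by
  ext1 j
  have hE : pderiv j (X ⬝ᵥ U) = euler (U j) + (1 : ℕ) • U j := by
    simp only [pderiv_dotProduct_X, euler_apply, one_smul, pderiv_comm_of_curl_eq_zero hU j]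
    exact add_comm _ _
  rw [grad, pderiv_radialAverage, zero_add, hE, radialAverage_euler_add one_ne_zero]

theorem curl_radialAverage_cross_X {V : Fin 3 → MvPolynomial (Fin 3) K}
    (hV : divergence V = 0) : curl ((fun i => radialAverage 2 (V i)) ⨯₃ X) = V := by
  have hdiv : divergence (fun i => radialAverage 2 (V i)) = 0 := by
    simp only [divergence, pderiv_radialAverage, ← map_sum] at hV ⊢
    rw [hV, map_zero]
  ext1 i
  rw [curl_cross_X, hdiv, zero_mul, sub_zero, euler_radialAverage_add two_ne_zero]

theorem divergence_radialAverage_mul_X {σ : Type*} [Fintype σ] [Nonempty σ]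
    (f : MvPolynomial σ K) : divergence (fun i => radialAverage (Fintype.card σ) f * X i) = f := by
  rw [divergence_mul_X, euler_radialAverage_add Fintype.card_ne_zero]

end Exactness

theorem hasFDerivAt_eval {𝕜 σ : Type*} [NontriviallyNormedField 𝕜] [Fintype σ]
    (q : MvPolynomial σ 𝕜) (x : σ → 𝕜) :
    HasFDerivAt (fun y => eval y q)
      (∑ j, eval x (pderiv j q) • ContinuousLinearMap.proj (R := 𝕜) (φ := fun _ : σ => 𝕜) j) x := by
  induction q using MvPolynomial.induction_on with
  | C a =>
    simp only [eval_C]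
    exact (hasFDerivAt_const a x).congr_fderiv (by ext; simp)
  | add p q hp hq =>
    simp only [eval_add]
    exact (hp.add hq).congr_fderiv (by ext; simp [add_mul, Finset.sum_add_distrib])
  | mul_X p n hp =>
    simp only [eval_mul, eval_X]
    refine (hp.mul (hasFDerivAt_apply n x)).congr_fderiv ?_
    classical
    ext v
    simp [Pi.single_apply, add_mul, Finset.sum_add_distrib, apply_ite (eval x), Finset.mul_sum,
      mul_assoc]

noncomputable def vecEval {ι σ R : Type*} [CommSemiring R] (U : ι → MvPolynomial σ R)
    (x : σ → R) : ι → R :=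
  fun i => eval x (U i)

section VecEval

variable {ι σ R : Type*}

@[simp]
theorem vecEval_zero [CommSemiring R] : vecEval (0 : ι → MvPolynomial σ R) = 0 := by
  ext; simp [vecEval]

theorem vecEval_add [CommSemiring R] (U V : ι → MvPolynomial σ R) (x : σ → R) :
    vecEval (U + V) x = vecEval U x + vecEval V x := by
  ext; simp [vecEval]

theorem vecEval_mul_X [CommSemiring R] (q : MvPolynomial σ R) (x : σ → R) :
    vecEval (fun i => q * X i) x = eval x q • x := by
  ext; simp [vecEval]

theorem vecEval_injective [CommRing R] [IsDomain R] [Infinite R] :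
    Function.Injective (vecEval : (ι → MvPolynomial σ R) → (σ → R) → ι → R) :=
  fun _ _ h => _root_.funext fun i => MvPolynomial.funext fun x => congrFun (congrFun h x) i

end VecEval

end MvPolynomial

local notation "ℙ" => restrictTotalDegree (Fin 3) ℝ

theorem vecEval_cross_X (Q : Fin 3 → MvPolynomial (Fin 3) ℝ) (x : Fin 3 → ℝ) :
    vecEval (Q ⨯₃ X) x = cross3 (vecEval Q x) x := by
  ext i
  fin_cases i <;> simp [vecEval, cross3, cross_apply]

theorem pd3_eval (q : MvPolynomial (Fin 3) ℝ) (i : Fin 3) (x : Fin 3 → ℝ) :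
    pd3 (fun y => eval y q) i x = eval x (pderiv i q) := by
  simp [pd3, (hasFDerivAt_eval q x).fderiv, Pi.single_apply]

theorem grad3_eval (q : MvPolynomial (Fin 3) ℝ) :
    grad3 (fun y => eval y q) = vecEval (grad q) := by
  ext x i
  exact pd3_eval q i x

theorem curl3_vecEval (U : Fin 3 → MvPolynomial (Fin 3) ℝ) :
    curl3 (vecEval U) = vecEval (curl U) := by
  ext x i
  fin_cases i <;> simp [curl3, curl, vecEval, pd3_eval]

theorem div3_vecEval (U : Fin 3 → MvPolynomial (Fin 3) ℝ) :
    div3 (vecEval U) = fun x => eval x (divergence U) := by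
  ext x
  simp [div3, divergence, vecEval, pd3_eval]

theorem isPoly3_iff {p : ℕ} {f : (Fin 3 → ℝ) → ℝ} :
    IsPoly3 p f ↔ ∃ q ∈ ℙ p, f = fun x => eval x q := by
  simp only [IsPoly3, mem_restrictTotalDegree, funext_iff]

theorem isPolyVec3_iff {p : ℕ} {u : (Fin 3 → ℝ) → Fin 3 → ℝ} :
    IsPolyVec3 p u ↔ ∃ U : Fin 3 → MvPolynomial (Fin 3) ℝ, (∀ i, U i ∈ ℙ p) ∧ u = vecEval U := by
  constructor
  · intro h
    choose U hU hu using h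
    exact ⟨U, fun i => (mem_restrictTotalDegree _ _ _).2 (hU i), funext fun x => funext (hu · x)⟩
  · rintro ⟨U, hU, rfl⟩ i
    exact isPoly3_iff.2 ⟨U i, hU i, rfl⟩

theorem mem_nedelecW1_iff {p : ℕ} {u : (Fin 3 → ℝ) → Fin 3 → ℝ} :
    u ∈ NedelecW1 p ↔ ∃ P Q : Fin 3 → MvPolynomial (Fin 3) ℝ,
      (∀ i, P i ∈ ℙ p) ∧ (∀ i, Q i ∈ ℙ p) ∧ u = vecEval (P + Q ⨯₃ X) := by
  constructor
  · rintro ⟨P, Q, hP, hQ, hu⟩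
    obtain ⟨P, hPdeg, rfl⟩ := isPolyVec3_iff.1 hP
    obtain ⟨Q, hQdeg, rfl⟩ := isPolyVec3_iff.1 hQ
    exact ⟨P, Q, hPdeg, hQdeg, funext fun x => by rw [hu, vecEval_add, vecEval_cross_X]⟩
  · rintro ⟨P, Q, hP, hQ, rfl⟩
    exact ⟨vecEval P, vecEval Q, isPolyVec3_iff.2 ⟨P, hP, rfl⟩, isPolyVec3_iff.2 ⟨Q, hQ, rfl⟩,
      fun x => by rw [vecEval_add, vecEval_cross_X]⟩

theorem mem_nedelecW2_iff {p : ℕ} {v : (Fin 3 → ℝ) → Fin 3 → ℝ} :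
    v ∈ NedelecW2 p ↔ ∃ (P : Fin 3 → MvPolynomial (Fin 3) ℝ) (q : MvPolynomial (Fin 3) ℝ),
      (∀ i, P i ∈ ℙ p) ∧ q ∈ ℙ p ∧ v = vecEval (P + fun i => q * X i) := by
  constructor
  · rintro ⟨P, q, hP, hq, hv⟩
    obtain ⟨P, hPdeg, rfl⟩ := isPolyVec3_iff.1 hP
    obtain ⟨q, hqdeg, rfl⟩ := isPoly3_iff.1 hq
    exact ⟨P, q, hPdeg, hqdeg, funext fun x => by rw [hv, vecEval_add, vecEval_mul_X]⟩
  · rintro ⟨P, q, hP, hq, rfl⟩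
    exact ⟨vecEval P, fun x => eval x q, isPolyVec3_iff.2 ⟨P, hP, rfl⟩, isPoly3_iff.2 ⟨q, hq, rfl⟩,
      fun x => by rw [vecEval_add, vecEval_mul_X]⟩

theorem ker_grad3 (p : ℕ) :
    {f | IsPoly3 (p + 1) f ∧ ∀ x, grad3 f x = 0} =
      {f : (Fin 3 → ℝ) → ℝ | ∃ c : ℝ, ∀ x, f x = c} := by
  ext f
  constructor
  · rintro ⟨hf, hgrad⟩
    obtain ⟨q, -, rfl⟩ := isPoly3_iff.1 hf
    have hq : grad q = 0 :=
      vecEval_injective (by rw [vecEval_zero, ← grad3_eval]; exact funext hgrad)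
    refine ⟨eval 0 q, fun x => is_const_of_fderiv_eq_zero
      (fun y => (hasFDerivAt_eval q y).differentiableAt) (fun y => ?_) x 0⟩
    simp [(hasFDerivAt_eval q y).fderiv, show ∀ j, pderiv j q = 0 from congrFun hq]
  · rintro ⟨c, hc⟩
    obtain rfl : f = fun x => eval x (C c) := funext fun x => by simp [hc]
    refine ⟨isPoly3_iff.2 ⟨C c, by simp [mem_restrictTotalDegree], rfl⟩, fun x => ?_⟩
    rw [grad3_eval]
    ext i
    simp [grad, vecEval]

theorem ker_curl3 (p : ℕ) :
    {u | u ∈ NedelecW1 p ∧ ∀ x, curl3 u x = 0} =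
      {u | ∃ f, IsPoly3 (p + 1) f ∧ ∀ x, u x = grad3 f x} := by
  ext u
  constructor
  · rintro ⟨hu, hcurl⟩
    obtain ⟨P, Q, hP, -, rfl⟩ := mem_nedelecW1_iff.1 hu
    have hU : curl (P + Q ⨯₃ X) = 0 :=
      vecEval_injective (by rw [vecEval_zero, ← curl3_vecEval]; exact funext hcurl)
    have hdot : X ⬝ᵥ (P + Q ⨯₃ X) = ∑ i, X i * P i := by
      rw [dotProduct_add, dot_cross_self, add_zero, dotProduct]
    refine ⟨fun x => eval x (radialAverage 0 (X ⬝ᵥ (P + Q ⨯₃ X))),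
      isPoly3_iff.2 ⟨_, ?_, rfl⟩, fun x => ?_⟩
    · rw [hdot]
      exact radialAverage_mem_restrictTotalDegree _
        (Submodule.sum_mem _ fun i _ => X_mul_mem_restrictTotalDegree i (hP i))
    · rw [grad3_eval, grad_radialAverage_dotProduct_X hU]
  · rintro ⟨f, hf, hu⟩
    obtain ⟨q, hq, rfl⟩ := isPoly3_iff.1 hf
    obtain rfl : u = vecEval (grad q) := by rw [← grad3_eval]; exact funext hu
    refine ⟨mem_nedelecW1_iff.2 ⟨grad q, 0, fun i => pderiv_mem_restrictTotalDegree i hq,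
      fun _ => zero_mem _, by simp⟩, fun x => ?_⟩
    simp [curl3_vecEval, curl_grad]

theorem ker_div3 (p : ℕ) :
    {v | v ∈ NedelecW2 p ∧ ∀ x, div3 v x = 0} =
      {v | ∃ u ∈ NedelecW1 p, ∀ x, v x = curl3 u x} := by
  ext v
  constructor
  · rintro ⟨hv, hdiv⟩
    obtain ⟨P, q, hP, -, rfl⟩ := mem_nedelecW2_iff.1 hv
    set V : Fin 3 → MvPolynomial (Fin 3) ℝ := P + fun i => q * X i
    have hV : divergence V = 0 :=
      MvPolynomial.funext fun x => by simpa [div3_vecEval] using hdiv x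
    have hcross : (fun i => radialAverage 2 (V i)) ⨯₃ X =
        (fun i => radialAverage 2 (P i)) ⨯₃ X := by
      have : (fun i => radialAverage 2 (V i)) =
          (fun i => radialAverage 2 (P i)) + fun i => radialAverage 2 (q * X i) :=
        funext fun i => map_add _ _ _
      rw [this, map_add, LinearMap.add_apply, radialAverage_mul_X_cross_X, add_zero]
    refine ⟨vecEval ((fun i => radialAverage 2 (P i)) ⨯₃ X), mem_nedelecW1_iff.2 ⟨0,
      fun i => radialAverage 2 (P i),
      fun _ => zero_mem _, fun i => radialAverage_mem_restrictTotalDegree _ (hP i), by simp⟩,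
      fun x => ?_⟩
    rw [curl3_vecEval, ← hcross, curl_radialAverage_cross_X hV]
  · rintro ⟨u, hu, hv⟩
    obtain ⟨P, Q, hP, hQ, rfl⟩ := mem_nedelecW1_iff.1 hu
    obtain rfl : v = vecEval (curl (P + Q ⨯₃ X)) := by rw [← curl3_vecEval]; exact funext hv
    have hP' : ∀ j, P j ∈ ℙ (p + 1) := fun j => restrictTotalDegree_mono p.le_succ (hP j)
    have hQ' : ∀ j, Q j ∈ ℙ (p + 1) := fun j => restrictTotalDegree_mono p.le_succ (hQ j)
    refine ⟨mem_nedelecW2_iff.2 ⟨fun i => curl P i + (euler (Q i) + 2 • Q i), -divergence Q,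
      fun i => add_mem (curl_mem_restrictTotalDegree hP' i)
        (add_mem (euler_mem_restrictTotalDegree (hQ i)) (nsmul_mem (hQ i) 2)),
      neg_mem (divergence_mem_restrictTotalDegree hQ'), ?_⟩, fun x => ?_⟩
    · refine congrArg vecEval (funext fun i => ?_)
      simp only [curl_add, Pi.add_apply, curl_cross_X]
      ring
    · simp [div3_vecEval, divergence_curl]

theorem range_div3 (p : ℕ) :
    {f | ∃ v ∈ NedelecW2 p, ∀ x, f x = div3 v x} = {f | IsPoly3 p f} := by
  ext f
  constructor
  · rintro ⟨v, hv, hf⟩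
    obtain ⟨P, q, hP, hq, rfl⟩ := mem_nedelecW2_iff.1 hv
    refine isPoly3_iff.2 ⟨divergence (P + fun i => q * X i), ?_,
      funext fun x => by rw [hf, div3_vecEval]⟩
    rw [divergence_add, divergence_mul_X]
    exact add_mem (divergence_mem_restrictTotalDegree fun i =>
      restrictTotalDegree_mono p.le_succ (hP i))
      (add_mem (euler_mem_restrictTotalDegree hq) (nsmul_mem hq _))
  · intro hf
    obtain ⟨q, hq, rfl⟩ := isPoly3_iff.1 hf
    refine ⟨vecEval fun i => radialAverage (Fintype.card (Fin 3)) q * X i,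
      mem_nedelecW2_iff.2 ⟨0, radialAverage (Fintype.card (Fin 3)) q, fun _ => zero_mem _,
        radialAverage_mem_restrictTotalDegree _ hq, by simp⟩, fun x => ?_⟩
    rw [div3_vecEval, divergence_radialAverage_mul_X]

/-- Exactness of the polynomial de Rham sequence
`ℝ → P_{p+1} → W¹_p → W²_p → P_p → 0` with maps: inclusion of constants, grad, curl, div. -/
theorem polynomial_deRham_exact (p : ℕ) :
    -- exactness at P_{p+1}: kernel of grad = constants
    ({f | IsPoly3 (p + 1) f ∧ ∀ x, grad3 f x = 0} =
      {f : (Fin 3 → ℝ) → ℝ | ∃ c : ℝ, ∀ x, f x = c}) ∧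
    -- exactness at W¹_p: kernel of curl = grad P_{p+1}
    ({u | u ∈ NedelecW1 p ∧ ∀ x, curl3 u x = 0} =
      {u | ∃ f, IsPoly3 (p + 1) f ∧ ∀ x, u x = grad3 f x}) ∧
    -- exactness at W²_p: kernel of div = curl W¹_p
    ({v | v ∈ NedelecW2 p ∧ ∀ x, div3 v x = 0} =
      {v | ∃ u ∈ NedelecW1 p, ∀ x, v x = curl3 u x}) ∧
    -- surjectivity of div onto P_p
    ({f | ∃ v ∈ NedelecW2 p, ∀ x, f x = div3 v x} = {f | IsPoly3 p f}) :=
  ⟨ker_grad3 p, ker_curl3 p, ker_div3 p, range_div3 p⟩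
end

section
/- For the smoothed Poincaré lifting R(u)(x) = ∫_B Φ(a) R_a(u)(x) da with smooth compactly supported weight Φ of unit integral, the kernel k(x,z) = ∫_1^∞ τ(1+τ) Φ(x + τz) z dτ satisfies the bound |k(x,z)| ≤ K(x)|z|^{-2} where K is locally bounded, smooth, and depends only on Φ. -/
open MeasureTheory

/-- Euclidean norm on `Fin 3 → ℝ`. -/
noncomputable def enorm3 (z : Fin 3 → ℝ) : ℝ := Real.sqrt (∑ i, z i * z i)

/-- The convolution kernel of the smoothed Poincaré lifting:
`k(x,z) = ∫_1^∞ τ(1+τ) Φ(x + τz) z dτ`. -/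
noncomputable def smoothedKernel (Φ : (Fin 3 → ℝ) → ℝ) (x z : Fin 3 → ℝ) : Fin 3 → ℝ :=
  ∫ τ in Set.Ioi (1:ℝ), (τ * (1 + τ) * Φ (x + τ • z)) • z

lemma enorm3_eq_norm (z : Fin 3 → ℝ) :
    enorm3 z = ‖(WithLp.equiv 2 (Fin 3 → ℝ)).symm z‖ := by
  rw [EuclideanSpace.norm_eq]
  simp [enorm3, Real.norm_eq_abs, sq_abs, sq]

lemma enorm3_nonneg (z : Fin 3 → ℝ) : 0 ≤ enorm3 z := Real.sqrt_nonneg _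

lemma enorm3_pos {z : Fin 3 → ℝ} (hz : z ≠ 0) : 0 < enorm3 z := by
  rw [enorm3_eq_norm, norm_pos_iff]
  simpa using hz

lemma enorm3_smul (c : ℝ) (z : Fin 3 → ℝ) : enorm3 (c • z) = |c| * enorm3 z := by
  rw [enorm3_eq_norm, enorm3_eq_norm]
  rw [show (WithLp.equiv 2 (Fin 3 → ℝ)).symm (c • z)
      = c • (WithLp.equiv 2 (Fin 3 → ℝ)).symm z from rfl]
  rw [norm_smul, Real.norm_eq_abs]

lemma enorm3_sub_le (a b : Fin 3 → ℝ) : enorm3 (a - b) ≤ enorm3 a + enorm3 b := by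
  rw [enorm3_eq_norm, enorm3_eq_norm, enorm3_eq_norm]
  exact norm_sub_le _ _

lemma enorm3_le_sqrt3 (w : Fin 3 → ℝ) : enorm3 w ≤ Real.sqrt 3 * ‖w‖ := by
  have h : ∀ i, w i * w i ≤ ‖w‖ ^ 2 := by
    intro i
    have h1 : |w i| ≤ ‖w‖ := by simpa [Real.norm_eq_abs] using norm_le_pi_norm w i
    nlinarith [abs_nonneg (w i), abs_mul_abs_self (w i)]
  have hsum : ∑ i, w i * w i ≤ 3 * ‖w‖ ^ 2 := by
    calc ∑ i, w i * w i ≤ ∑ _i : Fin 3, ‖w‖ ^ 2 := Finset.sum_le_sum (fun i _ => h i)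
      _ = 3 * ‖w‖ ^ 2 := by simp
  calc enorm3 w ≤ Real.sqrt (3 * ‖w‖ ^ 2) := Real.sqrt_le_sqrt hsum
    _ = Real.sqrt 3 * ‖w‖ := by
        rw [Real.sqrt_mul (by norm_num), Real.sqrt_sq (norm_nonneg w)]

lemma pi_norm_le_enorm3 (w : Fin 3 → ℝ) : ‖w‖ ≤ enorm3 w := by
  apply pi_norm_le_iff_of_nonneg (enorm3_nonneg w) |>.2
  intro i
  rw [Real.norm_eq_abs, ← Real.sqrt_sq_eq_abs, enorm3]
  apply Real.sqrt_le_sqrt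
  rw [sq]
  exact Finset.single_le_sum (fun j _ => mul_self_nonneg (w j)) (Finset.mem_univ i)

lemma enorm3_sq (x : Fin 3 → ℝ) : (enorm3 x) ^ 2 = ∑ i, x i * x i :=
  Real.sq_sqrt (Finset.sum_nonneg fun i _ => mul_self_nonneg (x i))

/-- For a smooth compactly supported weight `Φ` of unit integral,
the kernel `k(x,z) = ∫_1^∞ τ(1+τ)Φ(x+τz) z dτ` is bounded by `K(x)|z|⁻²`, where `K`
is a smooth (hence locally bounded) function depending only on `Φ`. -/
theorem smoothed_kernel_bound (Φ : (Fin 3 → ℝ) → ℝ) (hΦ : ContDiff ℝ (⊤ : ℕ∞) Φ)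
    (hsupp : HasCompactSupport Φ) (hint : ∫ a, Φ a = 1) :
    ∃ K : (Fin 3 → ℝ) → ℝ, ContDiff ℝ (⊤ : ℕ∞) K ∧
      (∀ s : Set (Fin 3 → ℝ), IsCompact s → ∃ M, ∀ x ∈ s, |K x| ≤ M) ∧
      ∀ x z : Fin 3 → ℝ, z ≠ 0 →
        enorm3 (smoothedKernel Φ x z) ≤ K x / (enorm3 z) ^ 2 := by
  -- a bound for `|Φ|`
  obtain ⟨M, hM0, hM⟩ : ∃ M, 0 ≤ M ∧ ∀ a, |Φ a| ≤ M := by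
    obtain ⟨C, hC⟩ := (hΦ.continuous.abs).bounded_above_of_compact_support hsupp.abs
    exact ⟨max C 0, le_max_right _ _,
      fun a => le_trans (by simpa using hC a) (le_max_left _ _)⟩
  -- a radius containing the support (w.r.t. `enorm3`)
  obtain ⟨R, hR0, hR⟩ : ∃ R, 0 < R ∧ ∀ a, Φ a ≠ 0 → enorm3 a ≤ R := by
    obtain ⟨ρ, hρ⟩ := hsupp.isBounded.subset_closedBall 0
    refine ⟨Real.sqrt 3 * max ρ 0 + 1, by positivity, fun a ha => ?_⟩
    have h1 : a ∈ tsupport Φ := subset_tsupport Φ ha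
    have h2 : ‖a‖ ≤ ρ := by simpa using hρ h1
    have := enorm3_le_sqrt3 a
    nlinarith [Real.sqrt_nonneg 3, norm_nonneg a, le_max_left ρ 0]
  refine ⟨fun x => 16 * Real.sqrt 3 * M * R * ((∑ i, x i * x i) + R ^ 2), ?_, ?_, ?_⟩
  · -- smoothness of K
    have hsum : ContDiff ℝ (⊤ : ℕ∞) (fun x : Fin 3 → ℝ => ∑ i, x i * x i) := by
      apply ContDiff.sum
      intro i _
      exact ((ContinuousLinearMap.proj i : (Fin 3 → ℝ) →L[ℝ] ℝ).contDiff).mul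
        ((ContinuousLinearMap.proj i : (Fin 3 → ℝ) →L[ℝ] ℝ).contDiff)
    exact contDiff_const.mul (hsum.add contDiff_const)
  · -- local boundedness of K
    intro s hs
    have hcont : ContinuousOn
        (fun x : Fin 3 → ℝ => 16 * Real.sqrt 3 * M * R * ((∑ i, x i * x i) + R ^ 2)) s := by
      apply Continuous.continuousOn
      continuity
    obtain ⟨B, hB⟩ := hs.exists_bound_of_continuousOn hcont
    exact ⟨B, fun x hx => by have := hB x hx; rwa [Real.norm_eq_abs] at this⟩
  · -- the kernel bound
    intro x z hz
    set r := enorm3 z with hr_def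
    have hr : 0 < r := enorm3_pos hz
    set n := enorm3 x with hn_def
    have hn0 : 0 ≤ n := enorm3_nonneg x
    set T : ℝ := (n + R) / r with hT_def
    have hT0 : 0 ≤ T := by positivity
    set S : Set ℝ := {τ : ℝ | 1 < τ ∧ Φ (x + τ • z) ≠ 0} with hS_def
    -- membership facts
    have hmem : ∀ τ ∈ S, enorm3 (x + τ • z) ≤ R ∧ τ ≤ T := by
      intro τ hτ
      obtain ⟨hτ1, hτΦ⟩ := hτ
      have hb : enorm3 (x + τ • z) ≤ R := hR _ hτΦ
      refine ⟨hb, ?_⟩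
      have h1 : enorm3 (τ • z) ≤ n + R := by
        have := enorm3_sub_le (x + τ • z) x
        have heq : (x + τ • z) - x = τ • z := by abel
        rw [heq] at this
        linarith
      rw [enorm3_smul, abs_of_pos (lt_trans one_pos hτ1)] at h1
      rw [hT_def, le_div_iff₀ hr]
      linarith
    -- measurability of S
    have hSmeas : MeasurableSet S := by
      have hopen : IsOpen S := by
        have hc : Continuous fun τ : ℝ => Φ (x + τ • z) :=
          hΦ.continuous.comp (by continuity)
        have : S = Set.Ioi 1 ∩ (fun τ : ℝ => Φ (x + τ • z)) ⁻¹' {0}ᶜ := by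
          ext τ; simp [hS_def]
        rw [this]
        exact isOpen_Ioi.inter (hc.isOpen_preimage _ isOpen_compl_singleton)
      exact hopen.measurableSet
    -- volume bound
    have hvol : volume S ≤ ENNReal.ofReal (4 * R / r) := by
      rcases Set.eq_empty_or_nonempty S with hS | ⟨τ₀, hτ₀⟩
      · simp [hS]
      · have hsub : S ⊆ Set.Icc (τ₀ - 2 * R / r) (τ₀ + 2 * R / r) := by
          intro τ hτ
          have h1 : enorm3 ((τ - τ₀) • z) ≤ 2 * R := by
            have heq : (τ - τ₀) • z = (x + τ • z) - (x + τ₀ • z) := by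
              rw [sub_smul]; abel
            rw [heq]
            have := enorm3_sub_le (x + τ • z) (x + τ₀ • z)
            have h2 := (hmem τ hτ).1
            have h3 := (hmem τ₀ hτ₀).1
            linarith
          rw [enorm3_smul] at h1
          have h4 : |τ - τ₀| ≤ 2 * R / r := by
            rw [le_div_iff₀ hr]; linarith [abs_nonneg (τ - τ₀)]
          rw [abs_le] at h4
          constructor <;> linarith [h4.1, h4.2]
        calc volume S ≤ volume (Set.Icc (τ₀ - 2 * R / r) (τ₀ + 2 * R / r)) :=
              measure_mono hsub
          _ = ENNReal.ofReal (4 * R / r) := by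
              rw [Real.volume_Icc]; congr 1; ring
    have hvolfin : volume S < ⊤ := lt_of_le_of_lt hvol ENNReal.ofReal_lt_top
    -- the dominating function
    set C : ℝ := 2 * T ^ 2 * M * r with hC_def
    have hC0 : 0 ≤ C := by positivity
    set g : ℝ → ℝ := S.indicator (fun _ => C) with hg_def
    have hg_int : Integrable g := by
      rw [hg_def, integrable_indicator_iff hSmeas]
      exact integrableOn_const hvolfin.ne
    have hg_nonneg : ∀ τ, 0 ≤ g τ := fun τ =>
      Set.indicator_nonneg (fun _ _ => hC0) τ
    -- pointwise bound
    have hpw : ∀ τ ∈ Set.Ioi (1:ℝ), ‖(τ * (1 + τ) * Φ (x + τ • z)) • z‖ ≤ g τ := by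
      intro τ hτ
      rw [Set.mem_Ioi] at hτ
      by_cases hΦ0 : Φ (x + τ • z) = 0
      · rw [hΦ0]
        simp [hg_nonneg τ]
      · have hτS : τ ∈ S := ⟨hτ, hΦ0⟩
        have hgτ : g τ = C := Set.indicator_of_mem hτS _
        rw [hgτ, norm_smul, Real.norm_eq_abs]
        have hzr : ‖z‖ ≤ r := pi_norm_le_enorm3 z
        have hτT : τ ≤ T := (hmem τ hτS).2
        have hΦb : |Φ (x + τ • z)| ≤ M := hM _
        have habs : |τ * (1 + τ) * Φ (x + τ • z)| ≤ 2 * T ^ 2 * M := by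
          rw [abs_mul, abs_of_pos (by nlinarith : (0:ℝ) < τ * (1 + τ))]
          have h1 : τ * (1 + τ) ≤ 2 * T ^ 2 := by nlinarith
          nlinarith [abs_nonneg (Φ (x + τ • z))]
        calc |τ * (1 + τ) * Φ (x + τ • z)| * ‖z‖ ≤ (2 * T ^ 2 * M) * r := by
              apply mul_le_mul habs hzr (norm_nonneg z) (by positivity)
          _ = C := by rw [hC_def]
    -- integral chain
    have h2 : ‖smoothedKernel Φ x z‖ ≤
        ∫ τ in Set.Ioi (1:ℝ), ‖(τ * (1 + τ) * Φ (x + τ • z)) • z‖ := by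
      rw [smoothedKernel]
      exact norm_integral_le_integral_norm _
    have h3 : (∫ τ in Set.Ioi (1:ℝ), ‖(τ * (1 + τ) * Φ (x + τ • z)) • z‖) ≤
        ∫ τ in Set.Ioi (1:ℝ), g τ := by
      apply integral_mono_of_nonneg
      · exact Filter.Eventually.of_forall fun τ => norm_nonneg _
      · exact hg_int.restrict
      · exact (ae_restrict_iff' measurableSet_Ioi).2 (Filter.Eventually.of_forall hpw)
    have h4 : (∫ τ in Set.Ioi (1:ℝ), g τ) ≤ ∫ τ, g τ :=
      setIntegral_le_integral hg_int (Filter.Eventually.of_forall hg_nonneg)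
    have h5 : (∫ τ, g τ) = (volume S).toReal * C := by
      rw [hg_def, integral_indicator_const _ hSmeas, smul_eq_mul]; rfl
    have h6 : (volume S).toReal ≤ 4 * R / r :=
      ENNReal.toReal_le_of_le_ofReal (by positivity) hvol
    -- combine
    have h7 : enorm3 (smoothedKernel Φ x z) ≤ Real.sqrt 3 * ((4 * R / r) * C) := by
      calc enorm3 (smoothedKernel Φ x z) ≤ Real.sqrt 3 * ‖smoothedKernel Φ x z‖ :=
            enorm3_le_sqrt3 _
        _ ≤ Real.sqrt 3 * ((4 * R / r) * C) := by
            apply mul_le_mul_of_nonneg_left _ (Real.sqrt_nonneg 3)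
            calc ‖smoothedKernel Φ x z‖ ≤ (volume S).toReal * C := by
                  linarith
              _ ≤ (4 * R / r) * C := mul_le_mul_of_nonneg_right h6 hC0
    -- final arithmetic
    have h8 : Real.sqrt 3 * ((4 * R / r) * C) =
        8 * Real.sqrt 3 * M * R * (n + R) ^ 2 / r ^ 2 := by
      rw [hC_def, hT_def]
      field_simp
      ring
    rw [h8] at h7
    have h9 : 8 * Real.sqrt 3 * M * R * (n + R) ^ 2 ≤
        16 * Real.sqrt 3 * M * R * ((∑ i, x i * x i) + R ^ 2) := by
      rw [← enorm3_sq x, ← hn_def]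
      nlinarith [Real.sqrt_nonneg 3, mul_nonneg hM0 hR0.le, sq_nonneg (n - R),
        mul_nonneg (mul_nonneg (Real.sqrt_nonneg 3) hM0) hR0.le]
    calc enorm3 (smoothedKernel Φ x z) ≤
          8 * Real.sqrt 3 * M * R * (n + R) ^ 2 / r ^ 2 := h7
      _ ≤ 16 * Real.sqrt 3 * M * R * ((∑ i, x i * x i) + R ^ 2) / r ^ 2 := by
          gcongr
end

section
/- Given the inverse inequality ‖u‖_{H¹(e)} ≤ C(p+1)²‖u‖_{L²(e)} for polynomials u of degree ≤ p+1 on an interval e, and an interpolation operator I_p with ‖u − I_p u‖_{H¹} ≤ C(p+1)^{-1}‖u‖_{H²} and ‖u − I_p u‖_{L²} ≤ C(p+1)^{-m}‖u‖_{H^m} (m = 1, 2), the L²-orthogonal projection Q* onto degree ≤ p+1 polynomials vanishing at the endpoints satisfies ‖u − Q*u‖_{H¹(e)} ≤ C‖u‖_{H²(e)} for all u ∈ H²(e) ∩ H¹₀(e), with C independent of p. -/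
/-! Let `r = I_p u` and `q = Q_p u`. Since `Q_p` is the L²-orthogonal projection, `q` is at least
as L²-close to `u` as `r`, so `‖r - q‖_{L²} ≤ 2 ‖u - r‖_{L²} ≤ 2 C_I (p+1)⁻² ‖u‖_{H²}`. As `r - q`
is a polynomial of degree ≤ p+1, the inverse inequality costs exactly the factor `(p+1)²` gained
here, so `‖r - q‖_{H¹} ≤ 2 C_inv C_I ‖u‖_{H²}`, and the triangle inequality through `r` finishes. -/

open MeasureTheory

/-- Univariate polynomial functions of degree ≤ n. -/
def PolySet (n : ℕ) : Set (ℝ → ℝ) :=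
  {f | ∃ q : Polynomial ℝ, q.natDegree ≤ n ∧ ∀ x, f x = q.eval x}

/-- Polynomials of degree ≤ p+1 on the interval `[α,β]` vanishing at the endpoints. -/
def PolyZero (α β : ℝ) (p : ℕ) : Set (ℝ → ℝ) :=
  {f | f ∈ PolySet (p + 1) ∧ f α = 0 ∧ f β = 0}

/-- L² norm on the interval `(α,β)`. -/
noncomputable def L2norm (α β : ℝ) (u : ℝ → ℝ) : ℝ :=
  (∫ x in α..β, (u x) ^ 2) ^ (1/2 : ℝ)

/-- H¹ norm on the interval `(α,β)`. -/
noncomputable def H1norm (α β : ℝ) (u : ℝ → ℝ) : ℝ :=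
  (∫ x in α..β, (u x) ^ 2 + (deriv u x) ^ 2) ^ (1/2 : ℝ)

/-- H² norm on the interval `(α,β)`. -/
noncomputable def H2norm (α β : ℝ) (u : ℝ → ℝ) : ℝ :=
  (∫ x in α..β, (u x) ^ 2 + (deriv u x) ^ 2 + (deriv (deriv u) x) ^ 2) ^ (1/2 : ℝ)

theorem PolySet.contDiff {n : ℕ} {f : ℝ → ℝ} (hf : f ∈ PolySet n) {k : WithTop ℕ∞} :
    ContDiff ℝ k f := by
  obtain ⟨q, -, hq⟩ := hf
  simpa [funext hq] using q.contDiff_aeval (𝕜 := ℝ) k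

theorem PolySet.sub_mem {n : ℕ} {f g : ℝ → ℝ} (hf : f ∈ PolySet n) (hg : g ∈ PolySet n) :
    f - g ∈ PolySet n := by
  obtain ⟨q, hqn, hq⟩ := hf
  obtain ⟨r, hrn, hr⟩ := hg
  exact ⟨q - r, (Polynomial.natDegree_sub_le q r).trans (max_le hqn hrn), by simp [hq, hr]⟩

theorem PolyZero.sub_mem {α β : ℝ} {p : ℕ} {f g : ℝ → ℝ} (hf : f ∈ PolyZero α β p)
    (hg : g ∈ PolyZero α β p) : f - g ∈ PolyZero α β p :=
  ⟨PolySet.sub_mem hf.1 hg.1, by simp [hf.2.1, hg.2.1], by simp [hf.2.2, hg.2.2]⟩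

section Energy

variable {α β : ℝ} {f f' g g' : ℝ → ℝ}

theorem integral_add_mul_sq_add_sq (t : ℝ) (hf : Continuous f) (hf' : Continuous f')
    (hg : Continuous g) (hg' : Continuous g') :
    ∫ x in α..β, (f x + t * g x) ^ 2 + (f' x + t * g' x) ^ 2
      = (∫ x in α..β, f x ^ 2 + f' x ^ 2) + 2 * t * (∫ x in α..β, f x * g x + f' x * g' x)
        + t ^ 2 * ∫ x in α..β, g x ^ 2 + g' x ^ 2 := by
  have hA : IntervalIntegrable (fun x => f x ^ 2 + f' x ^ 2) volume α β :=
    ((hf.pow 2).add (hf'.pow 2)).intervalIntegrable α β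
  have hX : IntervalIntegrable (fun x => 2 * t * (f x * g x + f' x * g' x)) volume α β :=
    (continuous_const.mul ((hf.mul hg).add (hf'.mul hg'))).intervalIntegrable α β
  have hB : IntervalIntegrable (fun x => t ^ 2 * (g x ^ 2 + g' x ^ 2)) volume α β :=
    (continuous_const.mul ((hg.pow 2).add (hg'.pow 2))).intervalIntegrable α β
  rw [← intervalIntegral.integral_const_mul, ← intervalIntegral.integral_const_mul,
    ← intervalIntegral.integral_add hA hX, ← intervalIntegral.integral_add (hA.add hX) hB]
  exact intervalIntegral.integral_congr fun x _ => by ring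

variable (hαβ : α ≤ β) (hf : Continuous f) (hf' : Continuous f') (hg : Continuous g)
  (hg' : Continuous g')
include hαβ hf hf' hg hg'

theorem integral_mul_add_mul_le_sqrt_mul_sqrt :
    ∫ x in α..β, f x * g x + f' x * g' x
      ≤ √(∫ x in α..β, f x ^ 2 + f' x ^ 2) * √(∫ x in α..β, g x ^ 2 + g' x ^ 2) := by
  set A := ∫ x in α..β, f x ^ 2 + f' x ^ 2
  set B := ∫ x in α..β, g x ^ 2 + g' x ^ 2
  set X := ∫ x in α..β, f x * g x + f' x * g' x
  have hA : 0 ≤ A := intervalIntegral.integral_nonneg hαβ fun x _ => by positivity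
  have hquad : ∀ t : ℝ, 0 ≤ B * (t * t) + 2 * X * t + A := fun t => by
    have h : 0 ≤ ∫ x in α..β, (f x + t * g x) ^ 2 + (f' x + t * g' x) ^ 2 :=
      intervalIntegral.integral_nonneg hαβ fun x _ => by positivity
    rw [integral_add_mul_sq_add_sq t hf hf' hg hg'] at h
    linarith
  have hdiscr : X ^ 2 ≤ A * B := by
    have := discrim_le_zero hquad
    rw [discrim] at this
    linarith
  calc X ≤ |X| := le_abs_self X
    _ ≤ √(A * B) := Real.abs_le_sqrt hdiscr
    _ = √A * √B := Real.sqrt_mul hA B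

theorem sqrt_integral_add_sq_add_sq_le :
    √(∫ x in α..β, (f x + g x) ^ 2 + (f' x + g' x) ^ 2)
      ≤ √(∫ x in α..β, f x ^ 2 + f' x ^ 2) + √(∫ x in α..β, g x ^ 2 + g' x ^ 2) := by
  have hA : 0 ≤ ∫ x in α..β, f x ^ 2 + f' x ^ 2 :=
    intervalIntegral.integral_nonneg hαβ fun x _ => by positivity
  have hB : 0 ≤ ∫ x in α..β, g x ^ 2 + g' x ^ 2 :=
    intervalIntegral.integral_nonneg hαβ fun x _ => by positivity
  have hexp := integral_add_mul_sq_add_sq (α := α) (β := β) 1 hf hf' hg hg'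
  simp only [one_mul, mul_one, one_pow] at hexp
  rw [Real.sqrt_le_iff, hexp, add_sq, Real.sq_sqrt hA, Real.sq_sqrt hB]
  have := integral_mul_add_mul_le_sqrt_mul_sqrt hαβ hf hf' hg hg'
  exact ⟨by positivity, by linarith⟩

end Energy

section Norms

variable {α β : ℝ}

theorem L2norm_eq_sqrt (u : ℝ → ℝ) : L2norm α β u = √(∫ x in α..β, u x ^ 2) :=
  (Real.sqrt_eq_rpow _).symm

theorem H1norm_eq_sqrt (u : ℝ → ℝ) :
    H1norm α β u = √(∫ x in α..β, u x ^ 2 + deriv u x ^ 2) :=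
  (Real.sqrt_eq_rpow _).symm

theorem L2norm_nonneg (u : ℝ → ℝ) : 0 ≤ L2norm α β u := by
  rw [L2norm_eq_sqrt]
  exact Real.sqrt_nonneg _

theorem H2norm_nonneg (u : ℝ → ℝ) : 0 ≤ H2norm α β u := by
  rw [H2norm, ← Real.sqrt_eq_rpow]
  exact Real.sqrt_nonneg _

theorem L2norm_sub_rev (u v : ℝ → ℝ) : L2norm α β (u - v) = L2norm α β (v - u) := by
  simp only [L2norm_eq_sqrt, Pi.sub_apply]
  congr 1
  exact intervalIntegral.integral_congr fun x _ => by ring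

theorem L2norm_sub_le_L2norm_sub_add_L2norm_sub (hαβ : α ≤ β) {u v w : ℝ → ℝ}
    (hu : Continuous u) (hv : Continuous v) (hw : Continuous w) :
    L2norm α β (u - w) ≤ L2norm α β (u - v) + L2norm α β (v - w) := by
  have h := sqrt_integral_add_sq_add_sq_le hαβ (hu.sub hv) (continuous_const (y := 0))
    (hv.sub hw) (continuous_const (y := 0))
  simpa [L2norm_eq_sqrt] using h

theorem H1norm_sub_le_H1norm_sub_add_H1norm_sub (hαβ : α ≤ β) {u v w : ℝ → ℝ}
    (hu : ContDiff ℝ 1 u) (hv : ContDiff ℝ 1 v) (hw : ContDiff ℝ 1 w) :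
    H1norm α β (u - w) ≤ H1norm α β (u - v) + H1norm α β (v - w) := by
  have hderiv : ∀ {f g : ℝ → ℝ}, ContDiff ℝ 1 f → ContDiff ℝ 1 g →
      deriv (f - g) = deriv f - deriv g := fun hf hg => funext fun x =>
    deriv_sub (hf.differentiable one_ne_zero x) (hg.differentiable one_ne_zero x)
  have h := sqrt_integral_add_sq_add_sq_le hαβ (hu.continuous.sub hv.continuous)
    ((hu.continuous_deriv le_rfl).sub (hv.continuous_deriv le_rfl))
    (hv.continuous.sub hw.continuous) ((hv.continuous_deriv le_rfl).sub (hw.continuous_deriv le_rfl))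
  simpa [H1norm_eq_sqrt, hderiv hu hv, hderiv hv hw, hderiv hu hw] using h

/-- Pythagoras: `u - r = (u - q) - (r - q)` with the two parts orthogonal. -/
theorem L2norm_sub_le_of_integral_mul_eq_zero (hαβ : α ≤ β) {u q r : ℝ → ℝ}
    (hu : Continuous u) (hq : Continuous q) (hr : Continuous r)
    (horth : ∫ x in α..β, (u x - q x) * (r x - q x) = 0) :
    L2norm α β (u - q) ≤ L2norm α β (u - r) := by
  have hexp := integral_add_mul_sq_add_sq (α := α) (β := β) (-1) (hu.sub hq)
    (continuous_const (y := 0)) (hr.sub hq) (continuous_const (y := 0))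
  have hrq : 0 ≤ ∫ x in α..β, (r x - q x) ^ 2 :=
    intervalIntegral.integral_nonneg hαβ fun x _ => sq_nonneg _
  have hpyth : ∫ x in α..β, (u x - r x) ^ 2
      = (∫ x in α..β, (u x - q x) ^ 2) + ∫ x in α..β, (r x - q x) ^ 2 := by
    simpa [horth] using hexp
  simp only [L2norm_eq_sqrt, Pi.sub_apply, hpyth]
  exact Real.sqrt_le_sqrt (le_add_of_nonneg_right hrq)

theorem H1norm_sub_le_of_integral_mul_eq_zero (hαβ : α ≤ β) {u q r : ℝ → ℝ} {K : ℝ}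
    (hu : ContDiff ℝ 1 u) (hq : ContDiff ℝ 1 q) (hr : ContDiff ℝ 1 r)
    (horth : ∫ x in α..β, (u x - q x) * (r x - q x) = 0)
    (hinv : H1norm α β (r - q) ≤ K * L2norm α β (r - q)) :
    H1norm α β (u - q) ≤ H1norm α β (u - r) + 2 * |K| * L2norm α β (u - r) := by
  have hL2 : L2norm α β (r - q) ≤ 2 * L2norm α β (u - r) := calc
    L2norm α β (r - q) ≤ L2norm α β (r - u) + L2norm α β (u - q) :=
      L2norm_sub_le_L2norm_sub_add_L2norm_sub hαβ hr.continuous hu.continuous hq.continuous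
    _ ≤ 2 * L2norm α β (u - r) := by
      rw [L2norm_sub_rev r u]
      linarith [L2norm_sub_le_of_integral_mul_eq_zero hαβ hu.continuous hq.continuous
        hr.continuous horth]
  calc H1norm α β (u - q) ≤ H1norm α β (u - r) + H1norm α β (r - q) :=
      H1norm_sub_le_H1norm_sub_add_H1norm_sub hαβ hu hr hq
    _ ≤ H1norm α β (u - r) + |K| * L2norm α β (r - q) := by
      gcongr
      exact hinv.trans (mul_le_mul_of_nonneg_right (le_abs_self K) (L2norm_nonneg _))
    _ ≤ H1norm α β (u - r) + 2 * |K| * L2norm α β (u - r) := by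
      rw [mul_assoc 2, mul_left_comm]
      gcongr

end Norms

theorem H1_error_L2_projection_general (α β : ℝ) (hαβ : α < β)
    (Q : ℕ → (ℝ → ℝ) → (ℝ → ℝ))
    (hQmem : ∀ p u, Q p u ∈ PolyZero α β p)
    (hQorth : ∀ p u, ∀ v ∈ PolyZero α β p, ∫ x in α..β, (u x - Q p u x) * v x = 0)
    (I : ℕ → (ℝ → ℝ) → (ℝ → ℝ)) (CI : ℝ)
    (hImem : ∀ p u, ContDiff ℝ 1 u → u α = 0 → u β = 0 → I p u ∈ PolyZero α β p)
    (hIH1 : ∀ p u, ContDiff ℝ 2 u →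
      H1norm α β (u - I p u) ≤ CI * ((p:ℝ) + 1)⁻¹ * H2norm α β u)
    (hIL2₂ : ∀ p u, ContDiff ℝ 2 u →
      L2norm α β (u - I p u) ≤ CI * (((p:ℝ) + 1)⁻¹) ^ 2 * H2norm α β u)
    (Cinv : ℝ)
    (hinv : ∀ p : ℕ, ∀ v ∈ PolySet (p + 1),
      H1norm α β v ≤ Cinv * ((p:ℝ) + 1) ^ 2 * L2norm α β v) :
    ∃ C : ℝ, 0 < C ∧ ∀ p : ℕ, ∀ u : ℝ → ℝ, ContDiff ℝ 2 u → u α = 0 → u β = 0 →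
      H1norm α β (u - Q p u) ≤ C * H2norm α β u := by
  refine ⟨|CI| + 2 * |Cinv| * |CI| + 1, by positivity, fun p u hu huα huβ => ?_⟩
  set N : ℝ := (p : ℝ) + 1
  have hN : 1 ≤ N := by simp [N]
  have hH2 : 0 ≤ H2norm α β u := H2norm_nonneg u
  have hu1 : ContDiff ℝ 1 u := hu.of_le one_le_two
  have hr := hImem p u hu1 huα huβ
  have hq := hQmem p u
  have hquasi := H1norm_sub_le_of_integral_mul_eq_zero hαβ.le hu1 (PolySet.contDiff hq.1)
    (PolySet.contDiff hr.1) (hQorth p u _ (PolyZero.sub_mem hr hq))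
    (hinv p _ (PolySet.sub_mem hr.1 hq.1))
  have hH1 : H1norm α β (u - I p u) ≤ |CI| * H2norm α β u := calc
    H1norm α β (u - I p u) ≤ CI * N⁻¹ * H2norm α β u := hIH1 p u hu
    _ ≤ |CI| * 1 * H2norm α β u := by
      gcongr
      · exact le_abs_self CI
      · exact inv_le_one_of_one_le₀ hN
    _ = |CI| * H2norm α β u := by rw [mul_one]
  have hL2 : N ^ 2 * L2norm α β (u - I p u) ≤ |CI| * H2norm α β u := calc
    N ^ 2 * L2norm α β (u - I p u) ≤ N ^ 2 * (CI * (N⁻¹) ^ 2 * H2norm α β u) := by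
      gcongr
      exact hIL2₂ p u hu
    _ = CI * H2norm α β u := by field_simp
    _ ≤ |CI| * H2norm α β u := by gcongr; exact le_abs_self CI
  rw [abs_mul, abs_of_nonneg (sq_nonneg N), mul_assoc 2, mul_assoc |Cinv|] at hquasi
  calc H1norm α β (u - Q p u)
      ≤ H1norm α β (u - I p u) + 2 * (|Cinv| * (N ^ 2 * L2norm α β (u - I p u))) := hquasi
    _ ≤ |CI| * H2norm α β u + 2 * (|Cinv| * (|CI| * H2norm α β u)) := by gcongr
    _ ≤ (|CI| + 2 * |Cinv| * |CI| + 1) * H2norm α β u := by nlinarith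

/-- Given the inverse inequality
`‖v‖_{H¹} ≤ C_inv (p+1)² ‖v‖_{L²}` for polynomials of degree ≤ p+1, and an
interpolation operator `I p` into the degree ≤ p+1 polynomials vanishing at the
endpoints with `‖u − I_p u‖_{H¹} ≤ C_I (p+1)⁻¹ ‖u‖_{H²}` and
`‖u − I_p u‖_{L²} ≤ C_I (p+1)^{-m} ‖u‖_{H^m}` for `m = 1, 2`, the L²-orthogonal
projection `Q p` onto polynomials of degree ≤ p+1 vanishing at the endpoints
satisfies `‖u − Q_p u‖_{H¹} ≤ C ‖u‖_{H²}` for all `u ∈ H² ∩ H¹₀`, uniformly in `p`. -/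
theorem H1_error_L2_projection (α β : ℝ) (hαβ : α < β)
    (Q : ℕ → (ℝ → ℝ) → (ℝ → ℝ))
    (hQmem : ∀ p u, Q p u ∈ PolyZero α β p)
    (hQorth : ∀ p u, ∀ v ∈ PolyZero α β p, ∫ x in α..β, (u x - Q p u x) * v x = 0)
    (I : ℕ → (ℝ → ℝ) → (ℝ → ℝ)) (CI : ℝ)
    (hImem : ∀ p u, ContDiff ℝ 1 u → u α = 0 → u β = 0 → I p u ∈ PolyZero α β p)
    (hIH1 : ∀ p u, ContDiff ℝ 2 u →
      H1norm α β (u - I p u) ≤ CI * ((p:ℝ) + 1)⁻¹ * H2norm α β u)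
    (hIL2₁ : ∀ p u, ContDiff ℝ 1 u →
      L2norm α β (u - I p u) ≤ CI * ((p:ℝ) + 1)⁻¹ * H1norm α β u)
    (hIL2₂ : ∀ p u, ContDiff ℝ 2 u →
      L2norm α β (u - I p u) ≤ CI * (((p:ℝ) + 1)⁻¹) ^ 2 * H2norm α β u)
    (Cinv : ℝ)
    (hinv : ∀ p : ℕ, ∀ v ∈ PolySet (p + 1),
      H1norm α β v ≤ Cinv * ((p:ℝ) + 1) ^ 2 * L2norm α β v) :
    ∃ C : ℝ, 0 < C ∧ ∀ p : ℕ, ∀ u : ℝ → ℝ, ContDiff ℝ 2 u → u α = 0 → u β = 0 →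
      H1norm α β (u - Q p u) ≤ C * H2norm α β u :=
  H1_error_L2_projection_general α β hαβ Q hQmem hQorth I CI hImem hIH1 hIL2₂ Cinv hinv
end
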